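/- arXiv:2308.03528 — 8 statements merged into one kernel-verified Lean document; each statement's English description precedes it below -/
import Mathlib

section
/- If Breaker has a winning strategy in the Maker-Breaker game of arboricity on a finite graph G with k+1 colours, then Breaker also has a winning strategy on G with k colours. -/
/-!
The Maker-Breaker game of arboricity on a finite simple graph `G` with `k` colours:
Maker and Breaker alternately colour edges (Maker first, represented by turn `true`),
so that every colour class is a forest.  Breaker wins when some uncoloured edge cannot
receive any colour without creating a monochromatic cycle.
-/

/-- The spanning subgraph of `G` consisting of those edges given colour `c`
by the partial edge-colouring `f`. -/
def colourSub {V : Type} (G : SimpleGraph V) {k : ℕ} (f : Sym2 V → Option (Fin k))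
    (c : Fin k) : SimpleGraph V where
  Adj u v := G.Adj u v ∧ f s(u, v) = some c
  symm := ⟨fun u v h => ⟨h.1.symm, by rw [Sym2.eq_swap]; exact h.2⟩⟩
  loopless := ⟨fun u h => G.loopless.irrefl u h.1⟩

/-- Assigning colour `c` to the uncoloured edge `xy` is a legal move: it creates no
monochromatic cycle, i.e. `x` and `y` are not already joined by colour-`c` edges. -/
def ArbLegal {V : Type} (G : SimpleGraph V) {k : ℕ} (f : Sym2 V → Option (Fin k))
    (x y : V) (c : Fin k) : Prop :=
  G.Adj x y ∧ f s(x, y) = none ∧ ¬ (colourSub G f c).Reachable x y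

/-- Some uncoloured edge cannot be given any colour: Breaker's winning condition. -/
def ArbStuck {V : Type} (G : SimpleGraph V) {k : ℕ} (f : Sym2 V → Option (Fin k)) : Prop :=
  ∃ x y, G.Adj x y ∧ f s(x, y) = none ∧ ∀ c, (colourSub G f c).Reachable x y

/-- `ArbBreakerWins G k f t` : Breaker has a winning strategy in the game of arboricity
with `k` colours from the position with partial colouring `f`, where `t = true` means it
is Maker's turn and `t = false` means it is Breaker's turn. -/
inductive ArbBreakerWins {V : Type} [DecidableEq V] (G : SimpleGraph V) (k : ℕ) :
    (Sym2 V → Option (Fin k)) → Bool → Prop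
  | stuck (f : Sym2 V → Option (Fin k)) (t : Bool) (h : ArbStuck G f) :
      ArbBreakerWins G k f t
  | maker (f : Sym2 V → Option (Fin k))
      (hne : ∃ e ∈ G.edgeSet, f e = none)
      (h : ∀ x y c, ArbLegal G f x y c →
        ArbBreakerWins G k (Function.update f s(x, y) (some c)) false) :
      ArbBreakerWins G k f true
  | breaker (f : Sym2 V → Option (Fin k)) (x y : V) (c : Fin k)
      (hc : ArbLegal G f x y c)
      (h : ArbBreakerWins G k (Function.update f s(x, y) (some c)) true) :
      ArbBreakerWins G k f false

/-!
Breaker, playing with `k` colours, imagines a game with `k + 1` colours in which her colour `c`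
is `c.castSucc`, so that Maker's real moves are imagined moves avoiding the extra colour. She
answers each imagined move `xy ↦ c` by colouring `xy` with the real colour behind `c` if that
is legal, and with any legal colour otherwise (if none is legal she has already won). Either
way every imagined colour class is, up to connectivity, contained in the corresponding real
one, so Maker's legal moves stay legal in the imagined game and the imagined winning position
is a real one.
-/

theorem SimpleGraph.Reachable.of_forall_adj_reachable {V : Type} {A B : SimpleGraph V}
    (h : ∀ u v, A.Adj u v → B.Reachable u v) {u v : V} (huv : A.Reachable u v) :
    B.Reachable u v := by
  rw [SimpleGraph.reachable_iff_reflTransGen] at huv ⊢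
  exact Relation.ReflTransGen.lift' id (fun a b hab => (B.reachable_iff_reflTransGen a b).mp
    (h a b hab)) _ _ huv

section Simulation

variable {V : Type} {G : SimpleGraph V} {k m : ℕ}

theorem colourSub_adj {f : Sym2 V → Option (Fin k)} {c : Fin k} {u v : V} :
    (colourSub G f c).Adj u v ↔ G.Adj u v ∧ f s(u, v) = some c := Iff.rfl

theorem colourSub_empty (c : Fin k) : colourSub G (fun _ => none) c = ⊥ := by
  ext u v
  simp [colourSub_adj]

/-- The `k`-colour position `f` simulates the `m`-colour position `g` along `φ`: both have the
same uncoloured edges, and colour `φ c` of `g` connects no more than colour `c` of `f`. -/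
structure Simulates (G : SimpleGraph V) (φ : Fin k → Fin m) (f : Sym2 V → Option (Fin k))
    (g : Sym2 V → Option (Fin m)) : Prop where
  eq_none_iff : ∀ e, f e = none ↔ g e = none
  reachable : ∀ c u v, (colourSub G g (φ c)).Reachable u v → (colourSub G f c).Reachable u v

theorem simulates_empty (φ : Fin k → Fin m) :
    Simulates G φ (fun _ => none) (fun _ => none) where
  eq_none_iff _ := by simp
  reachable c u v := by simp [colourSub_empty]

variable [DecidableEq V]

theorem colourSub_le_update {f : Sym2 V → Option (Fin k)} {x y : V} (hxy : f s(x, y) = none)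
    (c d : Fin k) : colourSub G f d ≤ colourSub G (Function.update f s(x, y) (some c)) d := by
  intro u v ⟨huv, hf⟩
  have hne : s(u, v) ≠ s(x, y) := fun he => by simp [he, hxy] at hf
  exact ⟨huv, by rwa [Function.update_of_ne hne]⟩

theorem colourSub_update_adj_self {f : Sym2 V → Option (Fin k)} {x y : V} (hxy : G.Adj x y)
    (c : Fin k) : (colourSub G (Function.update f s(x, y) (some c)) c).Adj x y :=
  ⟨hxy, Function.update_self ..⟩

variable {φ : Fin k → Fin m} {f : Sym2 V → Option (Fin k)} {g : Sym2 V → Option (Fin m)}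

theorem Simulates.update (hs : Simulates G φ f g) {x y : V} (hxy : f s(x, y) = none)
    {c' : Fin k} {c : Fin m}
    (hc : ∀ d, φ d = c → (colourSub G (Function.update f s(x, y) (some c')) d).Reachable x y) :
    Simulates G φ (Function.update f s(x, y) (some c')) (Function.update g s(x, y) (some c)) where
  eq_none_iff e := by
    by_cases he : e = s(x, y)
    · simp [he]
    · simp [he, hs.eq_none_iff e]
  reachable d := by
    refine fun _ _ => SimpleGraph.Reachable.of_forall_adj_reachable ?_
    rintro u v ⟨huv, hg⟩
    by_cases he : s(u, v) = s(x, y)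
    · rw [he, Function.update_self, Option.some_inj] at hg
      rcases Sym2.eq_iff.mp he with ⟨rfl, rfl⟩ | ⟨rfl, rfl⟩
      exacts [hc d hg.symm, (hc d hg.symm).symm]
    · rw [Function.update_of_ne he] at hg
      exact (hs.reachable d u v (SimpleGraph.Adj.reachable ⟨huv, hg⟩)).mono
        (colourSub_le_update hxy c' d)

theorem Simulates.update_maker (hφ : Function.Injective φ) (hs : Simulates G φ f g) {x y : V}
    (hxy : G.Adj x y) (hf : f s(x, y) = none) (c : Fin k) :
    Simulates G φ (Function.update f s(x, y) (some c)) (Function.update g s(x, y) (some (φ c))) :=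
  hs.update hf fun d hd => by
    obtain rfl := hφ hd
    exact (colourSub_update_adj_self hxy d).reachable

/-- Breaker's reply in the `k`-colour game to the move `xy ↦ c` of the simulated game. -/
theorem Simulates.exists_update_breaker (hφ : Function.Injective φ) (hs : Simulates G φ f g)
    {x y : V} (hxy : G.Adj x y) (hf : f s(x, y) = none) (c : Fin m)
    (hlegal : ∃ c', ¬ (colourSub G f c').Reachable x y) :
    ∃ c', ArbLegal G f x y c' ∧
      Simulates G φ (Function.update f s(x, y) (some c')) (Function.update g s(x, y) (some c)) := by
  by_cases hlift : ∃ d, φ d = c ∧ ¬ (colourSub G f d).Reachable x y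
  · obtain ⟨d, rfl, hd⟩ := hlift
    exact ⟨d, ⟨hxy, hf, hd⟩, hs.update_maker hφ hxy hf d⟩
  · push Not at hlift
    obtain ⟨c', hc'⟩ := hlegal
    exact ⟨c', ⟨hxy, hf, hc'⟩,
      hs.update hf fun d hd => (hlift d hd).mono (colourSub_le_update hf c' d)⟩

theorem ArbBreakerWins.of_simulates (hφ : Function.Injective φ) {t : Bool}
    (hw : ArbBreakerWins G m g t) (hs : Simulates G φ f g) : ArbBreakerWins G k f t := by
  induction hw generalizing f with
  | stuck g t hstuck =>
    obtain ⟨x, y, hxy, hg, hreach⟩ := hstuck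
    exact .stuck f t ⟨x, y, hxy, (hs.eq_none_iff _).mpr hg, fun c => hs.reachable c x y (hreach _)⟩
  | maker g hne _ ih =>
    obtain ⟨e, he, hg⟩ := hne
    refine .maker f ⟨e, he, (hs.eq_none_iff e).mpr hg⟩ fun x y c ⟨hxy, hf, hc⟩ => ?_
    have hlegal : ArbLegal G g x y (φ c) :=
      ⟨hxy, (hs.eq_none_iff _).mp hf, fun h => hc (hs.reachable c x y h)⟩
    exact ih x y (φ c) hlegal (hs.update_maker hφ hxy hf c)
  | breaker g x y c hc _ ih =>
    obtain ⟨hxy, hg, -⟩ := hc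
    have hf : f s(x, y) = none := (hs.eq_none_iff _).mpr hg
    by_cases hstuck : ∀ c', (colourSub G f c').Reachable x y
    · exact .stuck f false ⟨x, y, hxy, hf, hstuck⟩
    · push Not at hstuck
      obtain ⟨c', hlegal, hs'⟩ := hs.exists_update_breaker hφ hxy hf c hstuck
      exact .breaker f x y c' hlegal (ih hs')

end Simulation

theorem arboricity_breaker_monotone_general {V : Type} [DecidableEq V]
    (G : SimpleGraph V) (k : ℕ)
    (h : ArbBreakerWins G (k + 1) (fun _ => none) true) :
    ArbBreakerWins G k (fun _ => none) true :=
  h.of_simulates (Fin.castSucc_injective k) (simulates_empty _)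

/-- If Breaker has a winning strategy in the game of arboricity on a
finite graph `G` with `k + 1` colours, then Breaker also has a winning strategy on `G`
with `k` colours. -/
theorem arboricity_breaker_monotone {V : Type} [Fintype V] [DecidableEq V]
    (G : SimpleGraph V) (k : ℕ)
    (h : ArbBreakerWins G (k + 1) (fun _ => none) true) :
    ArbBreakerWins G k (fun _ => none) true :=
  arboricity_breaker_monotone_general G k h
end

section
/- For the ordered vertex colouring game on the graph H_r with the prescribed vertex order, Maker has a winning strategy with 3 colours. -/
/-- In the ordered vertex colouring game, colour `c` is legal at vertex `v` under the
partial colouring `col` when no earlier neighbour of `v` has colour `c`. -/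
def OLegal {n k : ℕ} (G : SimpleGraph (Fin n)) (col : Fin n → Option (Fin k))
    (v : Fin n) (c : Fin k) : Prop :=
  ∀ j : Fin n, j < v → G.Adj j v → col j ≠ some c

/-- `OMakerWins G k col m` : in the ordered vertex colouring game on `G` with palette
`Fin k`, where vertices are coloured in the natural order of `Fin n`, the first `m`
vertices have been coloured as recorded in `col`, and Maker (who colours the
even-indexed positions, moving first) has a strategy guaranteeing that all vertices
get coloured. -/
inductive OMakerWins {n : ℕ} (G : SimpleGraph (Fin n)) (k : ℕ) :
    (Fin n → Option (Fin k)) → ℕ → Prop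
  | done (col : Fin n → Option (Fin k)) (m : ℕ) (h : n ≤ m) : OMakerWins G k col m
  | maker (col : Fin n → Option (Fin k)) (m : ℕ) (h : m < n) (hm : m % 2 = 0)
      (c : Fin k) (hc : OLegal G col ⟨m, h⟩ c)
      (ih : OMakerWins G k (Function.update col ⟨m, h⟩ (some c)) (m + 1)) :
      OMakerWins G k col m
  | breaker (col : Fin n → Option (Fin k)) (m : ℕ) (h : m < n) (hm : m % 2 = 1)
      (hex : ∃ c, OLegal G col ⟨m, h⟩ c)
      (ih : ∀ c, OLegal G col ⟨m, h⟩ c →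
        OMakerWins G k (Function.update col ⟨m, h⟩ (some c)) (m + 1)) :
      OMakerWins G k col m

/-- `OBreakerWins G k col m` : from the position where the first `m` vertices are
coloured as in `col`, Breaker has a strategy forcing some vertex to become impossible
to colour in the ordered vertex colouring game on `G` with palette `Fin k`. -/
inductive OBreakerWins {n : ℕ} (G : SimpleGraph (Fin n)) (k : ℕ) :
    (Fin n → Option (Fin k)) → ℕ → Prop
  | stuck (col : Fin n → Option (Fin k)) (m : ℕ) (h : m < n)
      (hs : ¬ ∃ c, OLegal G col ⟨m, h⟩ c) : OBreakerWins G k col m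
  | maker (col : Fin n → Option (Fin k)) (m : ℕ) (h : m < n) (hm : m % 2 = 0)
      (ih : ∀ c, OLegal G col ⟨m, h⟩ c →
        OBreakerWins G k (Function.update col ⟨m, h⟩ (some c)) (m + 1)) :
      OBreakerWins G k col m
  | breaker (col : Fin n → Option (Fin k)) (m : ℕ) (h : m < n) (hm : m % 2 = 1)
      (c : Fin k) (hc : OLegal G col ⟨m, h⟩ c)
      (ih : OBreakerWins G k (Function.update col ⟨m, h⟩ (some c)) (m + 1)) :
      OBreakerWins G k col m

/-- The adjacency relation of the graph `H_r`, on vertex labels `1, …, 2r+7`: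
vertex `1` is adjacent to `2`, to the odd labels `3, 5, …, 2r+1`, and to `2r+4`,
`2r+6`, `2r+7`; vertex `2i+1` is adjacent to `2i+2` for `1 ≤ i ≤ r+1`; the even labels
`4, 6, …, 2r+2` are each adjacent to `2r+7`; vertex `2` is adjacent to `2r+5` and
`2r+7`; vertex `2r+4` is adjacent to `2r+6`; and vertex `2r+6` is adjacent to `2r+7`. -/
def HAdjLab (r a b : ℕ) : Prop :=
  (a = 1 ∧ (b = 2 ∨ (Odd b ∧ 3 ≤ b ∧ b ≤ 2 * r + 1) ∨ b = 2 * r + 4 ∨ b = 2 * r + 6 ∨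
    b = 2 * r + 7)) ∨
  (∃ i, 1 ≤ i ∧ i ≤ r + 1 ∧ a = 2 * i + 1 ∧ b = 2 * i + 2) ∨
  (Even a ∧ 4 ≤ a ∧ a ≤ 2 * r + 2 ∧ b = 2 * r + 7) ∨
  (a = 2 ∧ (b = 2 * r + 5 ∨ b = 2 * r + 7)) ∨
  (a = 2 * r + 4 ∧ b = 2 * r + 6) ∨
  (a = 2 * r + 6 ∧ b = 2 * r + 7)

/-- The graph `H_r` on `2r+7` vertices; the vertex of `Fin (2*r+7)` with value `i`
represents the vertex labelled `i + 1`, and the prescribed ordering is the natural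
order on `Fin (2*r+7)`. -/
def Hgraph (r : ℕ) : SimpleGraph (Fin (2 * r + 7)) :=
  SimpleGraph.fromRel (fun u v => HAdjLab r (u.1 + 1) (v.1 + 1))

def HArith (r a b : ℕ) : Prop :=
  (a = 1 ∧ (b = 2 ∨ (b % 2 = 1 ∧ 3 ≤ b ∧ b ≤ 2 * r + 1) ∨ b = 2 * r + 4 ∨ b = 2 * r + 6 ∨
    b = 2 * r + 7)) ∨
  (a % 2 = 1 ∧ 3 ≤ a ∧ a ≤ 2 * r + 3 ∧ b = a + 1) ∨
  (a % 2 = 0 ∧ 4 ≤ a ∧ a ≤ 2 * r + 2 ∧ b = 2 * r + 7) ∨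
  (a = 2 ∧ (b = 2 * r + 5 ∨ b = 2 * r + 7)) ∨
  (a = 2 * r + 4 ∧ b = 2 * r + 6) ∨
  (a = 2 * r + 6 ∧ b = 2 * r + 7)

lemma hadj_elim {r a b : ℕ} (h : HAdjLab r a b) : HArith r a b := by
  simp only [HArith]
  rcases h with ⟨h1, h2⟩ | ⟨i, h1, h2, h3, h4⟩ | ⟨h1, h2⟩ | h | h | h
  · rcases h2 with h2 | ⟨ho, h2⟩ | h2 | h2 | h2
    · omega
    · rw [Nat.odd_iff] at ho; omega
    all_goals omega
  · omega
  · rw [Nat.even_iff] at h1; omega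
  all_goals omega

lemma adj_arith {r m : ℕ} {j : Fin (2*r+7)} (hm : m < 2*r+7)
    (h : (Hgraph r).Adj j ⟨m, hm⟩) :
    HArith r (j.1+1) (m+1) ∨ HArith r (m+1) (j.1+1) := by
  rw [Hgraph, SimpleGraph.fromRel_adj] at h
  exact h.2.imp hadj_elim hadj_elim

lemma adj_mk {r : ℕ} {a b : ℕ} (ha : a < 2*r+7) (hb : b < 2*r+7) (hne : a ≠ b)
    (h : HAdjLab r (a+1) (b+1) ∨ HAdjLab r (b+1) (a+1)) :
    (Hgraph r).Adj ⟨a, ha⟩ ⟨b, hb⟩ := by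
  rw [Hgraph, SimpleGraph.fromRel_adj]
  exact ⟨by simpa [Fin.ext_iff] using hne, h⟩

lemma upd_mk {n : ℕ} {α : Sort*} (f : Fin n → α) {a b : ℕ} (ha : a < n) (hb : b < n)
    (v : α) (h : b ≠ a) : Function.update f ⟨a, ha⟩ v ⟨b, hb⟩ = f ⟨b, hb⟩ :=
  Function.update_of_ne (by simpa [Fin.ext_iff] using h) v f

lemma upd_mk_eq {n : ℕ} {α : Sort*} (f : Fin n → α) {a : ℕ} (ha ha' : a < n) (v : α) :
    Function.update f ⟨a, ha⟩ v ⟨a, ha'⟩ = v :=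
  Function.update_self _ _ _

lemma upd_ne' {n : ℕ} {α : Sort*} (f : Fin n → α) {a : ℕ} (ha : a < n) (v : α)
    (b : Fin n) (h : b.1 ≠ a) : Function.update f ⟨a, ha⟩ v b = f b :=
  Function.update_of_ne (fun e => h (by rw [e])) v f

lemma fin3_third : ∀ c a b : Fin 3, c ≠ 0 → c ≠ a → a ≠ 0 → b ≠ 0 → a ≠ b → c = b := by
  decide

lemma some_ne {k : ℕ} {a b : Fin k} (h : a ≠ b) : (some a : Option (Fin k)) ≠ some b := by
  simpa using h

lemma mid (r : ℕ) (x y : Fin 3) (hx : x ≠ 0) (hy : y ≠ 0) (hxy : x ≠ y) :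
    ∀ d i : ℕ, i + d = r + 1 → 1 ≤ i →
    ∀ col : Fin (2*r+7) → Option (Fin 3),
      col ⟨0, by omega⟩ = some 0 →
      col ⟨1, by omega⟩ = some x →
      (∀ p : Fin (2*r+7), p.1 % 2 = 1 → 3 ≤ p.1 → p.1 < 2*i → col p ≠ some y) →
      OMakerWins (Hgraph r) 3 col (2*i) := by
  intro d
  induction d with
  | zero =>
    intro i hid _ col h0 h1 hinv
    obtain rfl : i = r + 1 := by omega
    -- position 2r+2 : Maker plays x  (label 2r+3, no earlier neighbours)
    refine OMakerWins.maker _ _ (by omega) (by omega) x ?_ ?_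
    · intro j hj hadj
      exfalso
      have hjv : j.1 < 2*(r+1) := hj
      rcases adj_arith _ hadj with hD | hD <;> simp only [HArith] at hD <;> omega
    -- position 2r+3 : Breaker (label 2r+4, earlier nbrs 0 and 2r+2)
    refine OMakerWins.breaker _ _ (by omega) (by omega) ⟨y, ?_⟩ ?_
    · intro j hj hadj
      have hjv : j.1 < 2*(r+1)+1 := hj
      have hset : j.1 = 0 ∨ j.1 = 2*(r+1) := by
        rcases adj_arith _ hadj with hD | hD <;> simp only [HArith] at hD <;> omega
      rcases hset with hs | hs
      · rw [show j = (⟨0, by omega⟩ : Fin (2*r+7)) from Fin.ext hs]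
        rw [upd_mk _ _ _ _ (by omega), h0]
        exact some_ne (Ne.symm hy)
      · rw [show j = (⟨2*(r+1), by omega⟩ : Fin (2*r+7)) from Fin.ext hs]
        rw [upd_mk_eq]
        exact some_ne hxy
    intro c hc
    -- c must be y
    have hcy : c = y := by
      have n1 := hc ⟨0, by omega⟩ (show (0:ℕ) < 2*(r+1)+1 by omega)
        (adj_mk _ _ (by omega) (Or.inl (Or.inl ⟨rfl, Or.inr (Or.inr (Or.inl (by omega)))⟩)))
      rw [upd_mk _ _ _ _ (by omega), h0] at n1
      have n2 := hc ⟨2*(r+1), by omega⟩ (show 2*(r+1) < 2*(r+1)+1 by omega)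
        (adj_mk _ _ (by omega) (Or.inl (Or.inr (Or.inl ⟨r+1, by omega, by omega, by omega, by omega⟩))))
      rw [upd_mk_eq] at n2
      exact fin3_third c x y (fun e => n1 (by rw [e])) (fun e => n2 (by rw [e])) hx hy hxy
    rw [hcy]
    -- position 2r+4 : Maker plays 0 (label 2r+5, earlier nbr 1)
    refine OMakerWins.maker _ _ (by omega) (by omega) 0 ?_ ?_
    · intro j hj hadj
      have hjv : j.1 < 2*(r+1)+1+1 := hj
      have hset : j.1 = 1 := by
        rcases adj_arith _ hadj with hD | hD <;> simp only [HArith] at hD <;> omega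
      rw [show j = (⟨1, by omega⟩ : Fin (2*r+7)) from Fin.ext hset]
      rw [upd_mk _ _ _ _ (by omega), upd_mk _ _ _ _ (by omega), h1]
      exact some_ne hx
    -- position 2r+5 : Breaker (label 2r+6, earlier nbrs 0 and 2r+3)
    refine OMakerWins.breaker _ _ (by omega) (by omega) ⟨x, ?_⟩ ?_
    · intro j hj hadj
      have hjv : j.1 < 2*(r+1)+1+1+1 := hj
      have hset : j.1 = 0 ∨ j.1 = 2*(r+1)+1 := by
        rcases adj_arith _ hadj with hD | hD <;> simp only [HArith] at hD <;> omega
      rcases hset with hs | hs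
      · rw [show j = (⟨0, by omega⟩ : Fin (2*r+7)) from Fin.ext hs]
        rw [upd_mk _ _ _ _ (by omega), upd_mk _ _ _ _ (by omega),
          upd_mk _ _ _ _ (by omega), h0]
        exact some_ne (Ne.symm hx)
      · rw [show j = (⟨2*(r+1)+1, by omega⟩ : Fin (2*r+7)) from Fin.ext hs]
        rw [upd_mk _ _ _ _ (by omega), upd_mk_eq]
        exact some_ne (Ne.symm hxy)
    intro c hc
    have hcx : c = x := by
      have n1 := hc ⟨0, by omega⟩ (show (0:ℕ) < 2*(r+1)+1+1+1 by omega)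
        (adj_mk _ _ (by omega) (Or.inl (Or.inl ⟨rfl, Or.inr (Or.inr (Or.inr (Or.inl (by omega))))⟩)))
      rw [upd_mk _ _ _ _ (by omega), upd_mk _ _ _ _ (by omega),
        upd_mk _ _ _ _ (by omega), h0] at n1
      have n2 := hc ⟨2*(r+1)+1, by omega⟩ (show 2*(r+1)+1 < 2*(r+1)+1+1+1 by omega)
        (adj_mk _ _ (by omega) (Or.inl (Or.inr (Or.inr (Or.inr (Or.inr (Or.inl ⟨by omega, by omega⟩)))))))
      rw [upd_mk _ _ _ _ (by omega), upd_mk_eq] at n2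
      exact fin3_third c y x (fun e => n1 (by rw [e])) (fun e => n2 (by rw [e])) hy hx hxy.symm
    rw [hcx]
    -- position 2r+6 : Maker plays y (label 2r+7)
    refine OMakerWins.maker _ _ (by omega) (by omega) y ?_ ?_
    · intro j hj hadj
      have hjv : j.1 < 2*(r+1)+1+1+1+1 := hj
      have hset : j.1 = 0 ∨ j.1 = 1 ∨ (j.1 % 2 = 1 ∧ 3 ≤ j.1 ∧ j.1 ≤ 2*r+1) ∨
          j.1 = 2*(r+1)+1+1+1 := by
        rcases adj_arith _ hadj with hD | hD <;> simp only [HArith] at hD <;> omega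
      rcases hset with hs | hs | ⟨hsa, hsb, hsc⟩ | hs
      · rw [show j = (⟨0, by omega⟩ : Fin (2*r+7)) from Fin.ext hs]
        rw [upd_mk _ _ _ _ (by omega), upd_mk _ _ _ _ (by omega),
          upd_mk _ _ _ _ (by omega), upd_mk _ _ _ _ (by omega), h0]
        exact some_ne (Ne.symm hy)
      · rw [show j = (⟨1, by omega⟩ : Fin (2*r+7)) from Fin.ext hs]
        rw [upd_mk _ _ _ _ (by omega), upd_mk _ _ _ _ (by omega),
          upd_mk _ _ _ _ (by omega), upd_mk _ _ _ _ (by omega), h1]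
        exact some_ne hxy
      · rw [upd_ne' _ _ _ _ (by omega), upd_ne' _ _ _ _ (by omega),
          upd_ne' _ _ _ _ (by omega), upd_ne' _ _ _ _ (by omega)]
        exact hinv j hsa hsb (by omega)
      · rw [show j = (⟨2*(r+1)+1+1+1, by omega⟩ : Fin (2*r+7)) from Fin.ext hs]
        rw [upd_mk_eq]
        exact some_ne hxy
    exact OMakerWins.done _ _ (by omega)
  | succ d ih =>
    intro i hid hi1 col h0 h1 hinv
    -- position 2i : Maker plays y (label 2i+1, earlier nbr 0)
    refine OMakerWins.maker _ _ (by omega) (by omega) y ?_ ?_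
    · intro j hj hadj
      have hjv : j.1 < 2*i := hj
      have hset : j.1 = 0 := by
        rcases adj_arith _ hadj with hD | hD <;> simp only [HArith] at hD <;> omega
      rw [show j = (⟨0, by omega⟩ : Fin (2*r+7)) from Fin.ext hset]
      rw [h0]
      exact some_ne (Ne.symm hy)
    -- position 2i+1 : Breaker (label 2i+2, earlier nbr 2i)
    refine OMakerWins.breaker _ _ (by omega) (by omega) ⟨0, ?_⟩ ?_
    · intro j hj hadj
      have hjv : j.1 < 2*i+1 := hj
      have hset : j.1 = 2*i := by
        rcases adj_arith _ hadj with hD | hD <;> simp only [HArith] at hD <;> omega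
      rw [show j = (⟨2*i, by omega⟩ : Fin (2*r+7)) from Fin.ext hset]
      rw [upd_mk_eq]
      exact some_ne hy
    intro c hc
    have hcy : c ≠ y := by
      have n1 := hc ⟨2*i, by omega⟩ (show 2*i < 2*i+1 by omega)
        (adj_mk _ _ (by omega) (Or.inl (Or.inr (Or.inl ⟨i, hi1, by omega, by omega, by omega⟩))))
      rw [upd_mk_eq] at n1
      exact fun e => n1 (by rw [e])
    rw [show 2*i+1+1 = 2*(i+1) by ring]
    refine ih (i+1) (by omega) (by omega) _ ?_ ?_ ?_
    · rw [upd_mk _ _ _ _ (by omega), upd_mk _ _ _ _ (by omega)]; exact h0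
    · rw [upd_mk _ _ _ _ (by omega), upd_mk _ _ _ _ (by omega)]; exact h1
    · intro p hp1 hp3 hplt
      by_cases hp : p.1 = 2*i+1
      · rw [show p = (⟨2*i+1, by omega⟩ : Fin (2*r+7)) from Fin.ext hp]
        rw [upd_mk_eq]
        exact some_ne hcy
      · rw [upd_ne' _ _ _ _ (by omega), upd_ne' _ _ _ _ (by omega)]
        exact hinv p hp1 hp3 (by omega)

/-- Maker has a winning strategy in the ordered vertex colouring game
on `H_r` (with its prescribed vertex order) with 3 colours. -/
theorem maker_wins_Hr_three_colours (r : ℕ) :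
    OMakerWins (Hgraph r) 3 (fun _ => none) 0 := by
  refine OMakerWins.maker _ _ (by omega) (by omega) 0 ?_ ?_
  · intro j hj _
    exact absurd (show j.1 < 0 from hj) (Nat.not_lt_zero _)
  refine OMakerWins.breaker _ _ (by omega) (by omega) ⟨1, ?_⟩ ?_
  · intro j hj _
    have hjv : j.1 < 1 := hj
    have hj0 : j.1 = 0 := by omega
    rw [show j = (⟨0, by omega⟩ : Fin (2*r+7)) from Fin.ext hj0, upd_mk_eq]
    exact some_ne (by decide)
  intro c hc
  have hc0 : c ≠ 0 := by
    have n1 := hc ⟨0, by omega⟩ (show (0:ℕ) < 1 by omega)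
      (adj_mk _ _ (by omega) (Or.inl (Or.inl ⟨rfl, Or.inl (by omega)⟩)))
    rw [upd_mk_eq] at n1
    exact fun e => n1 (by rw [e])
  fin_cases c
  · exact absurd rfl hc0
  · exact mid r 1 2 (by decide) (by decide) (by decide) r 1 (by omega) (by omega) _
      (by rw [upd_mk _ _ _ _ (by omega), upd_mk_eq])
      (by rw [upd_mk_eq]; rfl)
      (fun p hp1 hp3 hplt => absurd hplt (by omega))
  · exact mid r 2 1 (by decide) (by decide) (by decide) r 1 (by omega) (by omega) _
      (by rw [upd_mk _ _ _ _ (by omega), upd_mk_eq])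
      (by rw [upd_mk_eq]; rfl)
      (fun p hp1 hp3 hplt => absurd hplt (by omega))
end

section
/- For every integer k ≥ 3 and every l > k, there exists a finite graph G with a linear order on its vertices such that Maker wins the ordered vertex colouring game on G with k colours, while Breaker wins the ordered vertex colouring game on G with l colours. -/
namespace OGNM

/-- Edge relation (as a relation on ℕ, always from smaller to larger position).
Vertices: `0` = root `r`; for `i < l`, `s < k-1`, position `2*(k*i+s)+1` is clique
vertex `s` of gadget `i`; position `2*(k*i+(k-1))+1` is the vertex `b_i`; position
`2*(k*l)+1` is the final vertex `v`.  Even positions `≥ 2` are isolated dummies. -/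
def E (k l x y : ℕ) : Prop :=
  (∃ i s, i < l ∧ s < k - 1 ∧ x = 0 ∧ y = 2*(k*i+s)+1) ∨
  (∃ i s t, i < l ∧ s < t ∧ t < k ∧ x = 2*(k*i+s)+1 ∧ y = 2*(k*i+t)+1) ∨
  (∃ i, i < l ∧ x = 2*(k*i+(k-1))+1 ∧ y = 2*(k*l)+1)

def G (k l : ℕ) : SimpleGraph (Fin (2*(k*l)+2)) :=
  SimpleGraph.fromRel fun a b => E k l a.val b.val

lemma E_odd {k l x y : ℕ} (h : E k l x y) : ∃ A, y = 2*A+1 := by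
  rcases h with ⟨i,s,_,_,_,hy⟩ | ⟨i,s,t,_,_,_,_,hy⟩ | ⟨i,_,_,hy⟩
  · exact ⟨k*i+s, hy⟩
  · exact ⟨k*i+t, hy⟩
  · exact ⟨k*l, hy⟩

lemma E_lt {k l x y : ℕ} (hk : 0 < k) (h : E k l x y) : x < y := by
  rcases h with ⟨i,s,_,_,hx,hy⟩ | ⟨i,s,t,_,hst,_,hx,hy⟩ | ⟨i,hi,hx,hy⟩
  · omega
  · have : k*i+s < k*i+t := by omega
    omega
  · have h2 : k*(i+1) ≤ k*l := Nat.mul_le_mul_left k hi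
    have h3 : k*(i+1) = k*i + k := by ring
    omega

lemma slot_lt {k l i s : ℕ} (hi : i < l) (hs : s < k) : k*i+s < k*l := by
  have h2 : k*(i+1) ≤ k*l := Nat.mul_le_mul_left k hi
  have h3 : k*(i+1) = k*i + k := by ring
  omega

lemma slot_lt_n {k l i s : ℕ} (hi : i < l) (hs : s < k) : 2*(k*i+s)+1 < 2*(k*l)+2 := by
  have := slot_lt hi hs
  omega

lemma slot_inj {k i s i' s' : ℕ} (hs : s < k) (hs' : s' < k)
    (h : k*i+s = k*i'+s') : i = i' ∧ s = s' := by
  rcases Nat.lt_trichotomy i i' with h1 | h1 | h1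
  · have h2 : k*(i+1) ≤ k*i' := Nat.mul_le_mul_left k h1
    have h3 : k*(i+1) = k*i + k := by ring
    omega
  · subst h1; omega
  · have h2 : k*(i'+1) ≤ k*i := Nat.mul_le_mul_left k h1
    have h3 : k*(i'+1) = k*i' + k := by ring
    omega

lemma E_into_slot {k l i t x : ℕ} (hk : 0 < k) (hi : i < l) (ht : t < k - 1) :
    E k l x (2*(k*i+t)+1) ↔ x = 0 ∨ ∃ s, s < t ∧ x = 2*(k*i+s)+1 := by
  constructor
  · rintro (⟨i',s',_,hs',hx,hy⟩ | ⟨i',s',t',hi',hst,ht',hx,hy⟩ | ⟨i',hi',hx,hy⟩)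
    · exact Or.inl hx
    · have heq : k*i'+t' = k*i+t := by omega
      obtain ⟨rfl, rfl⟩ := slot_inj ht' (by omega) heq
      exact Or.inr ⟨s', hst, hx⟩
    · exfalso
      have heq : k*l = k*i+t := by omega
      have := slot_lt hi (by omega : t < k)
      omega
  · rintro (rfl | ⟨s, hst, rfl⟩)
    · exact Or.inl ⟨i, t, hi, ht, rfl, rfl⟩
    · exact Or.inr (Or.inl ⟨i, s, t, hi, hst, by omega, rfl, rfl⟩)

lemma E_into_b {k l i x : ℕ} (hk : 0 < k) (hi : i < l) :
    E k l x (2*(k*i+(k-1))+1) ↔ ∃ s, s < k - 1 ∧ x = 2*(k*i+s)+1 := by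
  constructor
  · rintro (⟨i',s',_,hs',hx,hy⟩ | ⟨i',s',t',hi',hst,ht',hx,hy⟩ | ⟨i',hi',hx,hy⟩)
    · exfalso
      have heq : k*i'+s' = k*i+(k-1) := by omega
      obtain ⟨rfl, rfl⟩ := slot_inj (by omega) (by omega) heq
      omega
    · have heq : k*i'+t' = k*i+(k-1) := by omega
      obtain ⟨rfl, rfl⟩ := slot_inj ht' (by omega) heq
      exact ⟨s', by omega, hx⟩
    · exfalso
      have heq : k*l = k*i+(k-1) := by omega
      have := slot_lt hi (by omega : k-1 < k)
      omega
  · rintro ⟨s, hs, rfl⟩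
    exact Or.inr (Or.inl ⟨i, s, k-1, hi, hs, by omega, rfl, rfl⟩)

lemma E_into_v {k l x : ℕ} (hk : 0 < k) :
    E k l x (2*(k*l)+1) ↔ ∃ i, i < l ∧ x = 2*(k*i+(k-1))+1 := by
  constructor
  · rintro (⟨i',s',hi',hs',hx,hy⟩ | ⟨i',s',t',hi',hst,ht',hx,hy⟩ | ⟨i',hi',hx,hy⟩)
    · exfalso; have := slot_lt hi' (by omega : s' < k); omega
    · exfalso; have := slot_lt hi' ht'; omega
    · exact ⟨i', hi', hx⟩
  · rintro ⟨i, hi, rfl⟩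
    exact Or.inr (Or.inr ⟨i, hi, rfl, rfl⟩)

lemma adj_of_E {k l : ℕ} (hk : 0 < k) {a b : Fin (2*(k*l)+2)} (h : E k l a.val b.val) :
    (G k l).Adj a b := by
  rw [G, SimpleGraph.fromRel_adj]
  exact ⟨fun hab => absurd (congrArg Fin.val hab) (Nat.ne_of_lt (E_lt hk h)), Or.inl h⟩

lemma E_of_adj {k l : ℕ} (hk : 0 < k) {a b : Fin (2*(k*l)+2)} (hab : a < b) (h : (G k l).Adj a b) :
    E k l a.val b.val := by
  rw [G, SimpleGraph.fromRel_adj] at h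
  rcases h.2 with h2 | h2
  · exact h2
  · exact absurd (E_lt hk h2) (by omega)

lemma not_E_even {k l x m : ℕ} (hm : m % 2 = 0) : ¬ E k l x m := fun h => by
  obtain ⟨A, rfl⟩ := E_odd h; omega



def Total {n κ : ℕ} (col : Fin n → Option (Fin κ)) (m : ℕ) : Prop :=
  ∀ j : Fin n, j.val < m → ∃ c, col j = some c

def Proper (k l : ℕ) {κ : ℕ} (col : Fin (2*(k*l)+2) → Option (Fin κ)) (m : ℕ) : Prop :=
  ∀ a b : Fin (2*(k*l)+2), a.val < m → b.val < m → (G k l).Adj a b → col a ≠ col b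

lemma step {k l κ : ℕ} {col : Fin (2*(k*l)+2) → Option (Fin κ)} {m : ℕ}
    (h : m < 2*(k*l)+2) {c : Fin κ}
    (ht : Total col m) (hp : Proper k l col m) (hc : OLegal (G k l) col ⟨m, h⟩ c) :
    Total (Function.update col ⟨m, h⟩ (some c)) (m+1) ∧
      Proper k l (Function.update col ⟨m, h⟩ (some c)) (m+1) := by
  constructor
  · intro j hj
    by_cases hjm : j.val = m
    · have : j = ⟨m, h⟩ := Fin.ext hjm
      subst this
      exact ⟨c, Function.update_self _ _ _⟩
    · rw [Function.update_of_ne (fun he => hjm (congrArg Fin.val he))]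
      exact ht j (by omega)
  · intro a b ha hb hadj
    by_cases ham : a.val = m <;> by_cases hbm : b.val = m
    · exact absurd (Fin.ext (ham.trans hbm.symm)) hadj.ne
    · have ha' : a = ⟨m, h⟩ := Fin.ext ham
      subst ha'
      rw [Function.update_self, Function.update_of_ne (fun he => hbm (congrArg Fin.val he))]
      exact fun he => hc b (by simpa [Fin.lt_def] using Nat.lt_of_le_of_ne (by omega) hbm)
        hadj.symm he.symm
    · have hb' : b = ⟨m, h⟩ := Fin.ext hbm
      subst hb'
      rw [Function.update_self, Function.update_of_ne (fun he => ham (congrArg Fin.val he))]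
      exact hc a (by simpa [Fin.lt_def] using Nat.lt_of_le_of_ne (by omega) ham) hadj
    · rw [Function.update_of_ne (fun he => ham (congrArg Fin.val he)),
        Function.update_of_ne (fun he => hbm (congrArg Fin.val he))]
      exact hp a b (by omega) (by omega) hadj

lemma oLegal_even {k l κ : ℕ} (hk : 0 < k) {col : Fin (2*(k*l)+2) → Option (Fin κ)}
    {m : ℕ} (h : m < 2*(k*l)+2) (hm : m % 2 = 0) (c : Fin κ) :
    OLegal (G k l) col ⟨m, h⟩ c := by
  intro j hj hadj
  exact absurd (E_of_adj hk hj hadj) (not_E_even hm)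

lemma maker_aux {k l : ℕ} (hk : 3 ≤ k) (hl : k < l) :
    ∀ (d m : ℕ) (col : Fin (2*(k*l)+2) → Option (Fin k)), 2*(k*l)+2 ≤ m + d →
      Total col m → Proper k l col m → OMakerWins (G k l) k col m := by
  have hk0 : 0 < k := by omega
  intro d
  induction d with
  | zero => exact fun m col hd ht hp => OMakerWins.done col m (by omega)
  | succ d ihd =>
    intro m col hd ht hp
    by_cases h : m < 2*(k*l)+2
    swap
    · exact OMakerWins.done col m (by omega)
    rcases Nat.mod_two_eq_zero_or_one m with hm | hm
    · -- Maker's move: position is the root or a dummy, anything is legal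
      refine OMakerWins.maker col m h hm ⟨0, by omega⟩ (oLegal_even hk0 h hm _) ?_
      obtain ⟨ht', hp'⟩ := step h ht hp (oLegal_even hk0 h hm _)
      exact ihd (m+1) _ (by omega) ht' hp'
    · -- Breaker's move
      have hrec : ∀ c, OLegal (G k l) col ⟨m, h⟩ c →
          OMakerWins (G k l) k (Function.update col ⟨m, h⟩ (some c)) (m+1) := by
        intro c hc
        obtain ⟨ht', hp'⟩ := step h ht hp hc
        exact ihd (m+1) _ (by omega) ht' hp'
      refine OMakerWins.breaker col m h hm ?_ hrec
      obtain ⟨p, rfl⟩ : ∃ p, m = 2*p+1 := ⟨m/2, by omega⟩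
      obtain ⟨α, hα⟩ := ht ⟨0, by omega⟩ (by simp)
      have hpkl : p ≤ k*l := by omega
      rcases eq_or_lt_of_le hpkl with hpv | hplt
      · -- the final vertex v : every earlier neighbour has colour α
        subst hpv
        have key : ∀ j : Fin (2*(k*l)+2), j < (⟨2*(k*l)+1, h⟩ : Fin (2*(k*l)+2)) →
            (G k l).Adj j ⟨2*(k*l)+1, h⟩ → col j = some α := by
          intro j hj hadj
          have hE : E k l j.val (2*(k*l)+1) := E_of_adj hk0 hj hadj
          obtain ⟨i, hi, hjval⟩ := (E_into_v hk0).mp hE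
          have hjlt : j.val < 2*(k*l)+1 := hj
          obtain ⟨β, hβ⟩ := ht j (by omega)
          suffices hβα : β = α by rw [hβ, hβα]
          by_contra hne
          -- pigeonhole on the clique of gadget i
          set f : Fin (k-1) → Fin k := fun s =>
            (col ⟨2*(k*i+s.val)+1, slot_lt_n hi (by have := s.isLt; omega)⟩).getD ⟨0, by omega⟩ with hf
          have hslot_lt_m : ∀ s : Fin (k-1), 2*(k*i+s.val)+1 < 2*(k*l)+1 := by
            intro s
            have h8 := s.isLt
            have := slot_lt (k := k) (s := s.val) hi (by omega)
            omega
          have hcolf : ∀ s : Fin (k-1),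
              col ⟨2*(k*i+s.val)+1, slot_lt_n hi (by have := s.isLt; omega)⟩ = some (f s) := by
            intro s
            obtain ⟨d, hd⟩ := ht ⟨2*(k*i+s.val)+1, slot_lt_n hi (by have := s.isLt; omega)⟩
              (by simp only [Fin.val_mk]; have := hslot_lt_m s; omega)
            rw [hf]
            simp only [hd, Option.getD_some]
          have finj : Function.Injective f := by
            intro s s' hss
            by_contra hne'
            rcases Nat.lt_or_ge s.val s'.val with hlt | hge
            · have hadj' : (G k l).Adj ⟨2*(k*i+s.val)+1, slot_lt_n hi (by have := s.isLt; omega)⟩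
                  ⟨2*(k*i+s'.val)+1, slot_lt_n hi (by have := s.isLt; omega)⟩ :=
                adj_of_E hk0 (Or.inr (Or.inl ⟨i, s.val, s'.val, hi, hlt, by omega, rfl, rfl⟩))
              refine hp _ _ ?_ ?_ hadj' (by rw [hcolf, hcolf, hss])
              · simp only [Fin.val_mk]; have := hslot_lt_m s; omega
              · simp only [Fin.val_mk]; have := hslot_lt_m s'; omega
            · have hlt : s'.val < s.val := by
                rcases Nat.lt_or_ge s'.val s.val with h1 | h1
                · exact h1
                · exact absurd (Fin.ext (by omega)) hne'
              have hadj' : (G k l).Adj ⟨2*(k*i+s'.val)+1, slot_lt_n hi (by have := s.isLt; omega)⟩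
                  ⟨2*(k*i+s.val)+1, slot_lt_n hi (by have := s.isLt; omega)⟩ :=
                adj_of_E hk0 (Or.inr (Or.inl ⟨i, s'.val, s.val, hi, hlt, by omega, rfl, rfl⟩))
              refine hp _ _ ?_ ?_ hadj' (by rw [hcolf, hcolf, hss])
              · simp only [Fin.val_mk]; have := hslot_lt_m s'; omega
              · simp only [Fin.val_mk]; have := hslot_lt_m s; omega
          have fne_α : ∀ s : Fin (k-1), f s ≠ α := by
            intro s hfs
            have hadj0 : (G k l).Adj ⟨0, by omega⟩ ⟨2*(k*i+s.val)+1, slot_lt_n hi (by have := s.isLt; omega)⟩ :=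
              adj_of_E hk0 (Or.inl ⟨i, s.val, hi, by omega, rfl, rfl⟩)
            refine hp _ _ ?_ ?_ hadj0 (by rw [hα, hcolf, hfs])
            · simp only [Fin.val_mk]; omega
            · simp only [Fin.val_mk]; have := hslot_lt_m s; omega
          have fne_β : ∀ s : Fin (k-1), f s ≠ β := by
            intro s hfs
            have hadjb : (G k l).Adj ⟨2*(k*i+s.val)+1, slot_lt_n hi (by have := s.isLt; omega)⟩ j := by
              refine adj_of_E hk0 ?_
              rw [hjval]
              exact Or.inr (Or.inl ⟨i, s.val, k-1, hi, by omega, by omega, rfl, rfl⟩)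
            refine hp _ _ ?_ ?_ hadjb (by rw [hβ, hcolf, hfs])
            · simp only [Fin.val_mk]; have := hslot_lt_m s; omega
            · omega
          -- cardinality contradiction
          have himg : (Finset.univ.image f) ⊆ Finset.univ \ {α, β} := by
            intro x hx
            obtain ⟨s, _, rfl⟩ := Finset.mem_image.mp hx
            simp only [Finset.mem_sdiff, Finset.mem_univ, true_and, Finset.mem_insert,
              Finset.mem_singleton]
            push_neg
            exact ⟨fne_α s, fne_β s⟩
          have hc1 : (Finset.univ.image f).card = k - 1 := by
            rw [Finset.card_image_of_injective _ finj, Finset.card_univ, Fintype.card_fin]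
          have hc2 : (Finset.univ \ ({α, β} : Finset (Fin k))).card = k - 2 := by
            rw [Finset.card_sdiff_of_subset (by intro x _; exact Finset.mem_univ x)]
            rw [Finset.card_univ, Fintype.card_fin, Finset.card_insert_of_notMem
              (by simpa using fun hh => hne (by rw [hh])), Finset.card_singleton]
          have := Finset.card_le_card himg
          omega
        obtain ⟨c, hcα⟩ := Fintype.exists_ne_of_one_lt_card
          (by rw [Fintype.card_fin]; omega) α
        exact ⟨c, fun j hj hadj hcol => hcα (by
          rw [key j hj hadj] at hcol
          exact (Option.some_injective _ hcol).symm)⟩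
      · -- a clique vertex or a b-vertex
        set i := p / k with hi_def
        set t := p % k with ht_def
        have hik : k*i + t = p := Nat.div_add_mod p k
        have hil : i < l := by
          rw [hi_def]
          exact Nat.div_lt_of_lt_mul (by omega)
        have htk : t < k := Nat.mod_lt p (by omega)
        by_cases htb : t = k - 1
        · -- b-vertex: α is the unique legal colour
          refine ⟨α, fun j hj hadj hcol => ?_⟩
          have hE : E k l j.val (2*p+1) := E_of_adj hk0 hj hadj
          rw [show (2*p+1 : ℕ) = 2*(k*i+(k-1))+1 by omega] at hE
          obtain ⟨s, hs, hjval⟩ := (E_into_b hk0 hil).mp hE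
          have hadj0 : (G k l).Adj ⟨0, by omega⟩ j := by
            refine adj_of_E hk0 ?_
            rw [hjval]
            exact Or.inl ⟨i, s, hil, hs, rfl, rfl⟩
          have hjlt : j.val < 2*p+1 := hj
          refine hp _ j ?_ (by omega) hadj0 (by rw [hα, hcol])
          simp only [Fin.val_mk]; omega
        · -- clique vertex: pigeonhole gives a legal colour
          have htk1 : t < k - 1 := by omega
          by_contra hno
          push_neg at hno
          have hw : ∀ c : Fin k, ∃ j : Fin (2*(k*l)+2),
              (j.val = 0 ∨ ∃ s, s < t ∧ j.val = 2*(k*i+s)+1) ∧ col j = some c := by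
            intro c
            have hnoc := hno c
            rw [OLegal] at hnoc
            push_neg at hnoc
            obtain ⟨j, hj1, hj2, hj3⟩ := hnoc
            have hE : E k l j.val (2*p+1) := E_of_adj hk0 hj1 hj2
            rw [show (2*p+1 : ℕ) = 2*(k*i+t)+1 by omega] at hE
            exact ⟨j, (E_into_slot hk0 hil htk1).mp hE, hj3⟩
          choose w hw1 hw2 using hw
          have hinj : Set.InjOn (fun c : Fin k => (w c).val) ↑(Finset.univ : Finset (Fin k)) := by
            intro c _ c' _ hcc
            have hww : w c = w c' := Fin.ext hcc
            have := hw2 c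
            rw [hww, hw2 c'] at this
            exact Option.some_injective _ this.symm
          set S : Finset ℕ := insert 0 ((Finset.range t).image fun s => 2*(k*i+s)+1) with hS
          have hmaps : ∀ c ∈ (Finset.univ : Finset (Fin k)), (w c).val ∈ S := by
            intro c _
            rcases hw1 c with h0 | ⟨s, hst, hsv⟩
            · rw [h0]; exact Finset.mem_insert_self _ _
            · exact Finset.mem_insert_of_mem (Finset.mem_image.mpr
                ⟨s, Finset.mem_range.mpr hst, hsv.symm⟩)
          have hcard := Finset.card_le_card_of_injOn _ hmaps hinj
          rw [Finset.card_univ, Fintype.card_fin] at hcard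
          have hS1 : S.card ≤ t + 1 := by
            refine (Finset.card_insert_le _ _).trans ?_
            have := Finset.card_image_le (s := Finset.range t)
              (f := fun s => 2*(k*i+s)+1)
            rw [Finset.card_range] at this
            omega
          omega

def Inv2 (k l : ℕ) (col : Fin (2*(k*l)+2) → Option (Fin l)) (m : ℕ) : Prop :=
  (∀ (j : Fin (2*(k*l)+2)) (i s : ℕ) (hi : i < l), s < k-1 → j.val = 2*(k*i+s)+1 →
      j.val < m → col j ≠ some ⟨i, hi⟩) ∧
  (∀ (j : Fin (2*(k*l)+2)) (i : ℕ) (hi : i < l), j.val = 2*(k*i+(k-1))+1 →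
      j.val < m → col j = some ⟨i, hi⟩)

lemma breaker_aux {k l : ℕ} (hk : 3 ≤ k) (hl : k < l) :
    ∀ (d m : ℕ) (col : Fin (2*(k*l)+2) → Option (Fin l)), 2*(k*l)+2 ≤ m + d →
      m ≤ 2*(k*l)+1 →
      Total col m → Proper k l col m → Inv2 k l col m →
      OBreakerWins (G k l) l col m := by
  have hk0 : 0 < k := by omega
  have hl0 : 0 < l := by omega
  intro d
  induction d with
  | zero => intro m col hd hmn ht hp hinv; exact absurd hmn (by omega)
  | succ d ihd =>
    intro m col hd hmn ht hp hinv
    have h : m < 2*(k*l)+2 := by omega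
    rcases Nat.mod_two_eq_zero_or_one m with hm | hm
    · -- Maker's move: even position (root or dummy)
      refine OBreakerWins.maker col m h hm ?_
      intro c hc
      obtain ⟨ht', hp'⟩ := step h ht hp hc
      refine ihd (m+1) _ (by omega) (by omega) ht' hp' ⟨?_, ?_⟩
      · intro j i s hi hs hjv hjm
        rw [Function.update_of_ne (fun he => by
          have hje : j.val = m := congrArg Fin.val he
          omega)]
        exact hinv.1 j i s hi hs hjv (by omega)
      · intro j i hi hjv hjm
        rw [Function.update_of_ne (fun he => by
          have hje : j.val = m := congrArg Fin.val he
          omega)]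
        exact hinv.2 j i hi hjv (by omega)
    · -- Breaker's move (or the stuck vertex v)
      obtain ⟨α, hα⟩ := ht ⟨0, by omega⟩ (by simp only [Fin.val_mk]; omega)
      by_cases hpv : m = 2*(k*l)+1
      · -- the vertex v is stuck : every colour appears on an earlier b-vertex
        subst hpv
        refine OBreakerWins.stuck _ _ h ?_
        rintro ⟨c, hc⟩
        have hclt : k*c.val+(k-1) < k*l := slot_lt c.isLt (by omega)
        have hb2 := hinv.2 ⟨2*(k*c.val+(k-1))+1, by omega⟩ c.val c.isLt rfl
          (by simp only [Fin.val_mk]; omega)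
        exact hc ⟨2*(k*c.val+(k-1))+1, by omega⟩
          (by simp only [Fin.lt_def, Fin.val_mk]; omega)
          (adj_of_E hk0 (Or.inr (Or.inr ⟨c.val, c.isLt, rfl, rfl⟩)))
          (by rw [hb2])
      · -- a clique vertex or a b-vertex
        set i := (m/2) / k with hi_def
        set t := (m/2) % k with ht_def
        have hik : k*i + t = m/2 := Nat.div_add_mod (m/2) k
        have hil : i < l := by
          rw [hi_def]
          exact Nat.div_lt_of_lt_mul (by omega)
        have htk : t < k := Nat.mod_lt (m/2) (by omega)
        have hmval : m = 2*(k*i+t)+1 := by omega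
        by_cases htb : t = k - 1
        · -- b-vertex of gadget i : Breaker plays colour i
          have hleg : OLegal (G k l) col ⟨m, h⟩ (⟨i, hil⟩ : Fin l) := by
            intro j hj hadj
            have hjlt : j.val < m := hj
            have hE : E k l j.val m := E_of_adj hk0 hj hadj
            rw [show m = 2*(k*i+(k-1))+1 by omega] at hE
            obtain ⟨s, hs, hjval⟩ := (E_into_b hk0 hil).mp hE
            exact hinv.1 j i s hil hs hjval hjlt
          refine OBreakerWins.breaker col m h hm _ hleg ?_
          obtain ⟨ht', hp'⟩ := step h ht hp hleg
          refine ihd (m+1) _ (by omega) (by omega) ht' hp' ⟨?_, ?_⟩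
          · intro j i' s hi' hs hjv hjm
            by_cases hjm' : j.val = m
            · exfalso
              have heq : k*i'+s = k*i+(k-1) := by omega
              obtain ⟨h1, h2⟩ := slot_inj (by omega) (by omega) heq
              omega
            · rw [Function.update_of_ne (fun he => hjm' (congrArg Fin.val he))]
              exact hinv.1 j i' s hi' hs hjv (by omega)
          · intro j i' hi' hjv hjm
            by_cases hjm' : j.val = m
            · have heq : k*i'+(k-1) = k*i+(k-1) := by omega
              obtain ⟨h1, h2⟩ := slot_inj (by omega) (by omega) heq
              subst h1
              have hje : j = ⟨m, h⟩ := Fin.ext hjm'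
              rw [hje, Function.update_self]
            · rw [Function.update_of_ne (fun he => hjm' (congrArg Fin.val he))]
              exact hinv.2 j i' hi' hjv (by omega)
        · -- clique vertex (i,t) : Breaker avoids α, colour i, and earlier clique colours
          have htk1 : t < k - 1 := by omega
          set W : Finset (Fin l) := ((Finset.range t).attach).image (fun s =>
              (col ⟨2*(k*i+s.val)+1,
                slot_lt_n hil (by have := Finset.mem_range.mp s.2; omega)⟩).getD
                ⟨0, hl0⟩) with hW
          set F : Finset (Fin l) := insert α (insert ⟨i, hil⟩ W) with hF
          have hWcard : W.card ≤ t := by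
            refine le_trans Finset.card_image_le ?_
            rw [Finset.card_attach, Finset.card_range]
          have hFcard : F.card < l := by
            have h1 := Finset.card_insert_le α (insert (⟨i, hil⟩ : Fin l) W)
            have h2 := Finset.card_insert_le (⟨i, hil⟩ : Fin l) W
            rw [← hF] at h1
            omega
          have hex : ∃ c : Fin l, c ∉ F := by
            have hcompl : (Fᶜ).Nonempty := by
              rw [← Finset.card_pos, Finset.card_compl, Fintype.card_fin]
              omega
            obtain ⟨c, hc⟩ := hcompl
            exact ⟨c, Finset.mem_compl.mp hc⟩
          obtain ⟨c, hcF⟩ := hex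
          have hcα : c ≠ α := fun he => hcF (by rw [hF, he]; exact Finset.mem_insert_self _ _)
          have hci : c ≠ ⟨i, hil⟩ := fun he => hcF (by
            rw [hF, he]
            exact Finset.mem_insert_of_mem (Finset.mem_insert_self _ _))
          have hcW : c ∉ W := fun he => hcF (by
            rw [hF]
            exact Finset.mem_insert_of_mem (Finset.mem_insert_of_mem he))
          have hleg : OLegal (G k l) col ⟨m, h⟩ c := by
            intro j hj hadj
            have hjlt : j.val < m := hj
            have hE : E k l j.val m := E_of_adj hk0 hj hadj
            rw [show m = 2*(k*i+t)+1 by omega] at hE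
            rcases (E_into_slot hk0 hil htk1).mp hE with h0 | ⟨s, hst, hjval⟩
            · have hje : j = ⟨0, by omega⟩ := Fin.ext h0
              rw [hje, hα]
              exact fun hh => hcα (Option.some_injective _ hh).symm
            · obtain ⟨d0, hd0⟩ := ht j (by omega)
              have hje : (⟨2*(k*i+s)+1, slot_lt_n hil (by omega)⟩ : Fin (2*(k*l)+2)) = j :=
                Fin.ext hjval.symm
              have hmem : d0 ∈ W := by
                rw [hW]
                refine Finset.mem_image.mpr ⟨⟨s, Finset.mem_range.mpr hst⟩,
                  Finset.mem_attach _ _, ?_⟩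
                rw [hje, hd0]
                rfl
              rw [hd0]
              exact fun hh => hcW (by
                rw [show c = d0 from (Option.some_injective _ hh).symm]
                exact hmem)
          refine OBreakerWins.breaker col m h hm c hleg ?_
          obtain ⟨ht', hp'⟩ := step h ht hp hleg
          refine ihd (m+1) _ (by omega) (by omega) ht' hp' ⟨?_, ?_⟩
          · intro j i' s hi' hs hjv hjm
            by_cases hjm' : j.val = m
            · have heq : k*i'+s = k*i+t := by omega
              obtain ⟨h1, h2⟩ := slot_inj (by omega) (by omega) heq
              subst h1
              have hje : j = ⟨m, h⟩ := Fin.ext hjm'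
              rw [hje, Function.update_self]
              intro hh
              exact hci (Option.some_injective _ hh)
            · rw [Function.update_of_ne (fun he => hjm' (congrArg Fin.val he))]
              exact hinv.1 j i' s hi' hs hjv (by omega)
          · intro j i' hi' hjv hjm
            by_cases hjm' : j.val = m
            · exfalso
              have heq : k*i'+(k-1) = k*i+t := by omega
              obtain ⟨h1, h2⟩ := slot_inj (by omega) (by omega) heq
              omega
            · rw [Function.update_of_ne (fun he => hjm' (congrArg Fin.val he))]
              exact hinv.2 j i' hi' hjv (by omega)

end OGNM

/-- For every `k ≥ 3` and every `l > k` there is a finite graph `G`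
with a linear order on its vertices (realised as a graph on `Fin n` with its natural
order) such that Maker wins the ordered vertex colouring game on `G` with `k` colours
while Breaker wins the ordered vertex colouring game on `G` with `l` colours. -/
theorem ordered_game_not_monotone (k l : ℕ) (hk : 3 ≤ k) (hl : k < l) :
    ∃ (n : ℕ) (G : SimpleGraph (Fin n)),
      OMakerWins G k (fun _ => none) 0 ∧ OBreakerWins G l (fun _ => none) 0 := by
  refine ⟨2*(k*l)+2, OGNM.G k l, ?_, ?_⟩
  · exact OGNM.maker_aux hk hl (2*(k*l)+2) 0 _ (by omega)
      (fun j hj => absurd hj (by omega)) (fun a b ha hb _ => absurd ha (by omega))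
  · exact OGNM.breaker_aux hk hl (2*(k*l)+2) 0 _ (by omega) (by omega)
      (fun j hj => absurd hj (by omega))
      (fun a b ha hb _ => absurd ha (by omega))
      ⟨fun j i s hi hs hjv hjm => absurd hjm (by omega),
       fun j i hi hjv hjm => absurd hjm (by omega)⟩
end

section
/- In the graph H_r with the prescribed ordering and any palette of at least 3 colours, every vertex other than vertex 2r+7 has at most 2 neighbours that precede it in the ordering; hence only vertex 2r+7 can ever become uncolourable in the ordered vertex colouring game with at least 3 colours. -/
lemma avoid_two {k : ℕ} (hk : 3 ≤ k) (o1 o2 : Option (Fin k)) :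
    ∃ c : Fin k, some c ≠ o1 ∧ some c ≠ o2 := by
  by_contra h
  push_neg at h
  have h' : ∀ c : Fin k, (some c : Option (Fin k)) = o1 ∨ some c = o2 := by
    intro c
    rcases Classical.em ((some c : Option (Fin k)) = o1) with hc | hc
    · exact Or.inl hc
    · exact Or.inr (h c hc)
  have e0 := h' ⟨0, by omega⟩
  have e1 := h' ⟨1, by omega⟩
  have e2 := h' ⟨2, by omega⟩
  have clash : ∀ (o : Option (Fin k)) (a b : Fin k), a.1 ≠ b.1 →
      (some a : Option (Fin k)) = o → some b = o → False :=
    fun o a b hab h1 h2 => hab (congrArg Fin.val (Option.some.inj (h1.trans h2.symm)))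
  rcases e0 with e0 | e0 <;> rcases e1 with e1 | e1 <;> rcases e2 with e2 | e2 <;>
    first
      | exact clash _ _ _ (by simp) e0 e1
      | exact clash _ _ _ (by simp) e0 e2
      | exact clash _ _ _ (by simp) e1 e2

/-- In `H_r` with the prescribed ordering, every vertex other than the
vertex labelled `2r+7` has at most 2 neighbours preceding it in the ordering; hence with
any palette of at least 3 colours, every such vertex always admits a legal colour, so
only vertex `2r+7` can ever become uncolourable in the ordered vertex colouring game. -/
theorem only_last_vertex_can_be_stuck (r : ℕ) (v : Fin (2 * r + 7))
    (hv : v.1 + 1 ≠ 2 * r + 7) :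
    Set.ncard {j : Fin (2 * r + 7) | j < v ∧ (Hgraph r).Adj j v} ≤ 2 ∧
    ∀ k : ℕ, 3 ≤ k → ∀ col : Fin (2 * r + 7) → Option (Fin k),
      ∃ c : Fin k, OLegal (Hgraph r) col v c := by
  have hB : v.1 < 2 * r + 7 := v.2
  have hjlt : ∀ j : Fin (2 * r + 7), j < v → j.1 < v.1 := fun j h => h
  -- the value of the unique possible earlier neighbour other than vertex 0
  have htvlt : (if v.1 = 2 * r + 4 then 1 else if v.1 = 2 * r + 5 then 2 * r + 3
      else v.1 - 1) < 2 * r + 7 := by split_ifs <;> omega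
  set tv : ℕ := if v.1 = 2 * r + 4 then 1 else if v.1 = 2 * r + 5 then 2 * r + 3
      else v.1 - 1 with htv
  have key : ∀ j : Fin (2 * r + 7), j < v → (Hgraph r).Adj j v →
      j.1 = 0 ∨ j.1 = tv := by
    intro j hlt hadj
    have hjv : j.1 < v.1 := hjlt j hlt
    rw [Hgraph, SimpleGraph.fromRel_adj] at hadj
    obtain ⟨-, hrel⟩ := hadj
    rw [htv]
    unfold HAdjLab at hrel
    rcases hrel with
      (⟨h1, h2⟩ | ⟨i, hi1, hi2, hi3, hi4⟩ | ⟨he, h3, h4, h5⟩ | ⟨h6, h7⟩ |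
        ⟨h8, h9⟩ | ⟨h10, h11⟩) |
      (⟨h1, h2⟩ | ⟨i, hi1, hi2, hi3, hi4⟩ | ⟨he, h3, h4, h5⟩ | ⟨h6, h7⟩ |
        ⟨h8, h9⟩ | ⟨h10, h11⟩) <;>
      clear htv <;> split_ifs <;> omega
  constructor
  · have hsub : {j : Fin (2 * r + 7) | j < v ∧ (Hgraph r).Adj j v} ⊆
        {(⟨0, by omega⟩ : Fin (2 * r + 7)), ⟨tv, htvlt⟩} := by
      intro j hj
      rcases key j hj.1 hj.2 with h | h
      · exact Or.inl (Fin.ext h)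
      · exact Or.inr (Fin.ext h)
    calc Set.ncard {j : Fin (2 * r + 7) | j < v ∧ (Hgraph r).Adj j v}
        ≤ Set.ncard {(⟨0, by omega⟩ : Fin (2 * r + 7)), ⟨tv, htvlt⟩} :=
          Set.ncard_le_ncard hsub (Set.toFinite _)
      _ ≤ Set.ncard {(⟨tv, htvlt⟩ : Fin (2 * r + 7))} + 1 := Set.ncard_insert_le _ _
      _ ≤ 2 := by rw [Set.ncard_singleton]
  · intro k hk col
    obtain ⟨c, hc1, hc2⟩ := avoid_two hk (col ⟨0, by omega⟩) (col ⟨tv, htvlt⟩)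
    refine ⟨c, fun j hlt hadj => ?_⟩
    rcases key j hlt hadj with h | h
    · have : j = ⟨0, by omega⟩ := Fin.ext h
      rw [this]; exact fun hh => hc1 hh.symm
    · have : j = ⟨tv, htvlt⟩ := Fin.ext h
      rw [this]; exact fun hh => hc2 hh.symm
end

section
/- Breaker wins the ordered greedy colouring game on the graph H_1 (with its prescribed vertex order) with three colours, i.e., the forced greedy colouring of H_1 in label order fails with palette {1,2,3}. -/
/-- The graph `H_1` on vertices labelled `1, …, 9` (vertex `i+1` is represented by
`i : Fin 9`), with edges 1–2, 1–3, 1–6, 1–8, 1–9, 2–7, 2–9, 3–4, 4–9, 5–6, 6–8, 8–9. -/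
def H1 : SimpleGraph (Fin 9) :=
  SimpleGraph.fromRel (fun u v =>
    (u.1 = 0 ∧ v.1 = 1) ∨ (u.1 = 0 ∧ v.1 = 2) ∨ (u.1 = 0 ∧ v.1 = 5) ∨
    (u.1 = 0 ∧ v.1 = 7) ∨ (u.1 = 0 ∧ v.1 = 8) ∨ (u.1 = 1 ∧ v.1 = 6) ∨
    (u.1 = 1 ∧ v.1 = 8) ∨ (u.1 = 2 ∧ v.1 = 3) ∨ (u.1 = 3 ∧ v.1 = 8) ∨
    (u.1 = 4 ∧ v.1 = 5) ∨ (u.1 = 5 ∧ v.1 = 7) ∨ (u.1 = 7 ∧ v.1 = 8))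

/-- `col` is a greedy colouring of `G` in the natural vertex order: each vertex receives
a colour not present on any earlier neighbour, and moreover the minimal such colour. -/
def IsGreedyColouring {n k : ℕ} (G : SimpleGraph (Fin n)) (col : Fin n → Fin k) : Prop :=
  ∀ v : Fin n,
    (∀ j : Fin n, j < v → G.Adj j v → col j ≠ col v) ∧
    (∀ c : Fin k, c < col v → ∃ j : Fin n, j < v ∧ G.Adj j v ∧ col j = c)

lemma fin3cases (c : Fin 3) : c = 0 ∨ c = 1 ∨ c = 2 := by fin_cases c <;> simp

set_option maxHeartbeats 2000000 in
/-- The ordered greedy colouring game on `H_1` (with its prescribed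
vertex order) is fully deterministic, and with the three-colour palette the forced
greedy colouring of `H_1` in label order fails: no total greedy colouring of `H_1` with
3 colours exists, i.e. some vertex finds all three colours on its earlier neighbours.
In particular Breaker wins this game with three colours. -/
theorem breaker_wins_ordered_greedy_H1 :
    ¬ ∃ col : Fin 9 → Fin 3, IsGreedyColouring H1 col := by
  rintro ⟨col, h⟩
  -- col 0 = 0
  have e0 : col 0 = 0 := by
    rcases fin3cases (col 0) with e | e | e
    · exact e
    all_goals {
      obtain ⟨j, hj, -, -⟩ := (h 0).2 0 (by rw [e]; decide)
      exact absurd hj (by simp [Fin.lt_def]) }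
  -- col 1 = 1
  have e1 : col 1 = 1 := by
    rcases fin3cases (col 1) with e | e | e
    · exact absurd ((h 1).1 0 (by decide) (by simp [H1, SimpleGraph.fromRel_adj] <;> omega)) (by simp [e0, e])
    · exact e
    · obtain ⟨j, hj, hadj, hc⟩ := (h 1).2 1 (by rw [e]; decide)
      fin_cases j <;> simp_all [H1, SimpleGraph.fromRel_adj] <;> omega
  -- col 2 = 1
  have e2 : col 2 = 1 := by
    rcases fin3cases (col 2) with e | e | e
    · exact absurd ((h 2).1 0 (by decide) (by simp [H1, SimpleGraph.fromRel_adj] <;> omega)) (by simp [e0, e])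
    · exact e
    · obtain ⟨j, hj, hadj, hc⟩ := (h 2).2 1 (by rw [e]; decide)
      fin_cases j <;> simp_all [H1, SimpleGraph.fromRel_adj] <;> omega
  -- col 3 = 0
  have e3 : col 3 = 0 := by
    rcases fin3cases (col 3) with e | e | e
    · exact e
    all_goals {
      obtain ⟨j, hj, hadj, hc⟩ := (h 3).2 0 (by rw [e]; decide)
      fin_cases j <;> simp_all [H1, SimpleGraph.fromRel_adj] <;> omega }
  -- col 4 = 0
  have e4 : col 4 = 0 := by
    rcases fin3cases (col 4) with e | e | e
    · exact e
    all_goals {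
      obtain ⟨j, hj, hadj, hc⟩ := (h 4).2 0 (by rw [e]; decide)
      fin_cases j <;> simp_all [H1, SimpleGraph.fromRel_adj] <;> omega }
  -- col 5 = 1
  have e5 : col 5 = 1 := by
    rcases fin3cases (col 5) with e | e | e
    · exact absurd ((h 5).1 0 (by decide) (by simp [H1, SimpleGraph.fromRel_adj] <;> omega)) (by simp [e0, e])
    · exact e
    · obtain ⟨j, hj, hadj, hc⟩ := (h 5).2 1 (by rw [e]; decide)
      fin_cases j <;> simp_all [H1, SimpleGraph.fromRel_adj] <;> omega
  -- col 7 = 2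
  have e7 : col 7 = 2 := by
    rcases fin3cases (col 7) with e | e | e
    · exact absurd ((h 7).1 0 (by decide) (by simp [H1, SimpleGraph.fromRel_adj] <;> omega)) (by simp [e0, e])
    · exact absurd ((h 7).1 5 (by decide) (by simp [H1, SimpleGraph.fromRel_adj] <;> omega)) (by simp [e5, e])
    · exact e
  -- vertex 8 sees all three colours
  have n0 := (h 8).1 0 (by decide) (by simp [H1, SimpleGraph.fromRel_adj] <;> omega)
  have n1 := (h 8).1 1 (by decide) (by simp [H1, SimpleGraph.fromRel_adj] <;> omega)
  have n7 := (h 8).1 7 (by decide) (by simp [H1, SimpleGraph.fromRel_adj] <;> omega)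
  rcases fin3cases (col 8) with e | e | e <;> simp_all
end

section
/- There exists a graph G and an edge e of G such that col_cg(G − e) > col_cg(G); in particular col_cg(G) = 3 and col_cg(G − e) = 4 for the 8-vertex graph of Figure 3, so the connected game colouring number is not monotone under edge deletion. -/
set_option linter.unusedSectionVars false
set_option maxRecDepth 100000
set_option maxHeartbeats 4000000

def MarkElig {V : Type} (G : SimpleGraph V) (l : List V) (v : V) : Prop :=
  v ∉ l ∧ (l = [] ∨ ∃ u ∈ l, G.Adj u v)

noncomputable def markedNbrs {V : Type} (G : SimpleGraph V) (l : List V) (v : V) : ℕ :=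
  Set.ncard {u : V | u ∈ l ∧ G.Adj u v}

inductive MarkMakerWins {V : Type} (G : SimpleGraph V) (k : ℕ) : List V → Bool → Prop
  | done (l : List V) (t : Bool) (h : ∀ v, v ∈ l) : MarkMakerWins G k l t
  | maker (l : List V) (v : V) (hv : MarkElig G l v) (hcost : markedNbrs G l v + 1 ≤ k)
      (ih : MarkMakerWins G k (v :: l) false) : MarkMakerWins G k l true
  | breaker (l : List V) (hne : ∃ v, MarkElig G l v)
      (ihcost : ∀ v, MarkElig G l v → markedNbrs G l v + 1 ≤ k)
      (ih : ∀ v, MarkElig G l v → MarkMakerWins G k (v :: l) true) :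
      MarkMakerWins G k l false

noncomputable def connGameColNumber {V : Type} (G : SimpleGraph V) : ℕ :=
  sInf {k : ℕ | MarkMakerWins G k [] true}

def Fig3 : SimpleGraph (Fin 8) :=
  SimpleGraph.fromRel (fun u v =>
    (u.1 = 0 ∧ v.1 = 1) ∨ (u.1 = 1 ∧ v.1 = 2) ∨ (u.1 = 2 ∧ v.1 = 3) ∨
    (u.1 = 2 ∧ v.1 = 5) ∨ (u.1 = 4 ∧ v.1 = 3) ∨ (u.1 = 4 ∧ v.1 = 6) ∨
    (u.1 = 7 ∧ v.1 = 5) ∨ (u.1 = 7 ∧ v.1 = 6) ∨ (u.1 = 3 ∧ v.1 = 0) ∨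
    (u.1 = 3 ∧ v.1 = 6) ∨ (u.1 = 0 ∧ v.1 = 5) ∨ (u.1 = 5 ∧ v.1 = 6))

section Game

variable {V : Type} [DecidableEq V] [Fintype V] (G : SimpleGraph V) [DecidableRel G.Adj]

instance (l : List V) (v : V) : Decidable (MarkElig G l v) :=
  inferInstanceAs (Decidable (v ∉ l ∧ (l = [] ∨ ∃ u ∈ l, G.Adj u v)))

def mcost (l : List V) (v : V) : ℕ := (l.toFinset.filter (fun u => G.Adj u v)).card

lemma markedNbrs_eq (l : List V) (v : V) : markedNbrs G l v = mcost G l v := by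
  unfold markedNbrs mcost
  rw [show {u : V | u ∈ l ∧ G.Adj u v} = ↑(l.toFinset.filter (fun u => G.Adj u v)) by
    ext u; simp]
  exact Set.ncard_coe_finset _

def mwin (k : ℕ) : ℕ → List V → Bool → Bool
  | fuel, l, t =>
    decide (∀ v, v ∈ l) ||
      match fuel with
      | 0 => false
      | fuel + 1 =>
        if t then
          decide (∃ v, MarkElig G l v ∧ mcost G l v + 1 ≤ k ∧ mwin k fuel (v :: l) false = true)
        else
          decide ((∃ v, MarkElig G l v) ∧
            ∀ v, MarkElig G l v → mcost G l v + 1 ≤ k ∧ mwin k fuel (v :: l) true = true)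

lemma mwin_sound (k : ℕ) : ∀ fuel (l : List V) (t : Bool),
    mwin G k fuel l t = true → MarkMakerWins G k l t := by
  intro fuel
  induction fuel with
  | zero =>
    intro l t h
    rw [mwin] at h
    simp only [Bool.or_false] at h
    exact .done l t (of_decide_eq_true h)
  | succ fuel ih =>
    intro l t h
    rw [mwin] at h
    rcases Bool.or_eq_true_iff.mp h with h | h
    · exact .done l t (of_decide_eq_true h)
    · cases t with
      | true =>
        simp only [if_true] at h
        obtain ⟨v, hv, hc, hw⟩ := of_decide_eq_true h
        exact .maker l v hv (by rw [markedNbrs_eq]; exact hc) (ih _ _ hw)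
      | false =>
        rw [if_neg Bool.false_ne_true] at h
        obtain ⟨hne, hall⟩ := of_decide_eq_true h
        exact .breaker l hne (fun v hv => by rw [markedNbrs_eq]; exact (hall v hv).1)
          (fun v hv => ih _ _ (hall v hv).2)

lemma all_mem_of_long (l : List V) (hn : l.Nodup) (h : Fintype.card V ≤ l.length) :
    ∀ v, v ∈ l := by
  have hcard : l.toFinset.card = l.length := List.toFinset_card_of_nodup hn
  have : l.toFinset = Finset.univ :=
    Finset.eq_univ_of_card _ (le_antisymm (Finset.card_le_univ _) (by omega))
  intro v
  have : v ∈ l.toFinset := this ▸ Finset.mem_univ v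
  simpa using this

lemma mwin_complete (k : ℕ) {l : List V} {t : Bool} (h : MarkMakerWins G k l t)
    (hn : l.Nodup) : ∀ fuel, Fintype.card V ≤ fuel + l.length → mwin G k fuel l t = true := by
  induction h with
  | done l t h =>
    intro fuel _
    have hd : decide (∀ v, v ∈ l) = true := decide_eq_true (by exact h)
    cases fuel <;> rw [mwin, hd] <;> simp
  | maker l v hv hc _ ih =>
    intro fuel hfuel
    cases fuel with
    | zero =>
      rw [mwin]
      simp only [Bool.or_false, decide_eq_true_eq]
      exact all_mem_of_long l hn (by simpa using hfuel)
    | succ fuel =>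
      rw [mwin]
      apply Bool.or_eq_true_iff.mpr
      right
      simp only [if_true, decide_eq_true_eq]
      exact ⟨v, hv, by rw [← markedNbrs_eq]; exact hc,
        ih (List.nodup_cons.mpr ⟨hv.1, hn⟩) fuel (by simp only [List.length_cons] at hfuel ⊢; omega)⟩
  | breaker l hne hcost _ ih =>
    intro fuel hfuel
    cases fuel with
    | zero =>
      rw [mwin]
      simp only [Bool.or_false, decide_eq_true_eq]
      exact all_mem_of_long l hn (by simpa using hfuel)
    | succ fuel =>
      rw [mwin]
      apply Bool.or_eq_true_iff.mpr
      right
      rw [if_neg Bool.false_ne_true, decide_eq_true_eq]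
      exact ⟨hne, fun v hv => ⟨by rw [← markedNbrs_eq]; exact hcost v hv,
        ih v hv (List.nodup_cons.mpr ⟨hv.1, hn⟩) fuel (by simp only [List.length_cons] at hfuel ⊢; omega)⟩⟩

lemma MarkMakerWins.mono {k k' : ℕ} (hk : k ≤ k') {l : List V} {t : Bool}
    (h : MarkMakerWins G k l t) : MarkMakerWins G k' l t := by
  induction h with
  | done l t h => exact .done l t h
  | maker l v hv hc _ ih => exact .maker l v hv (hc.trans hk) ih
  | breaker l hne hc _ ih => exact .breaker l hne (fun v hv => (hc v hv).trans hk) ih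

lemma colNumber_eq (k : ℕ) (hwin : mwin G k (Fintype.card V) [] true = true)
    (hlose : k = 0 ∨ mwin G (k - 1) (Fintype.card V) [] true = false) :
    connGameColNumber G = k := by
  have hmem : MarkMakerWins G k [] true := mwin_sound G k _ _ _ hwin
  apply le_antisymm (Nat.sInf_le hmem)
  rcases hlose with rfl | hlose
  · exact Nat.zero_le _
  apply le_csInf ⟨k, hmem⟩
  intro b hb
  by_contra hlt
  push_neg at hlt
  have : MarkMakerWins G (k - 1) [] true := MarkMakerWins.mono G (by omega) hb
  have := mwin_complete G (k - 1) this List.nodup_nil (Fintype.card V) (by simp)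
  rw [this] at hlose
  simp at hlose

end Game

instance : DecidableRel Fig3.Adj := fun a b =>
  decidable_of_iff _ (SimpleGraph.fromRel_adj _ a b).symm

instance : DecidableRel (Fig3.deleteEdges {s((7 : Fin 8), (6 : Fin 8))}).Adj := fun a b =>
  decidable_of_iff (Fig3.Adj a b ∧ ¬ s(a, b) = s((7 : Fin 8), (6 : Fin 8)))
    (by rw [SimpleGraph.deleteEdges_adj]; simp)

/-- There is a graph `G` (the 8-vertex graph of Figure 3) and an edge
`e` of `G` such that the connected game colouring number increases when `e` is deleted:
`col_cg(G) = 3` and `col_cg(G − e) = 4`.  Hence the connected game colouring number is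
not monotone under edge deletion. -/
theorem connected_colouring_number_not_edge_monotone :
    Fig3.Adj 7 6 ∧
    connGameColNumber Fig3 = 3 ∧
    connGameColNumber (Fig3.deleteEdges {s((7 : Fin 8), (6 : Fin 8))}) = 4 := by
  refine ⟨by decide, ?_, ?_⟩
  · exact colNumber_eq Fig3 3 (by decide) (Or.inr (by decide))
  · exact colNumber_eq _ 4 (by decide) (Or.inr (by decide))
end

section
/- If Breaker has a winning strategy in the vertex colouring game with blanks on a graph G using k+1 colours, then Breaker has a winning strategy with k colours; i.e., the vertex colouring game with blanks is monotone (downward for Breaker) in the number of colours. -/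
/-- In the vertex colouring game with blanks, the state of a vertex is `none`
(unplayed), `some none` (declared blank by Breaker), or `some (some c)` (coloured `c`). -/
abbrev BState (k : ℕ) := Option (Option (Fin k))

/-- Colour `c` is legal at `v`: the vertex is unplayed and no neighbour has colour `c`. -/
def BLegal {V : Type} (G : SimpleGraph V) {k : ℕ} (col : V → BState k)
    (v : V) (c : Fin k) : Prop :=
  col v = none ∧ ∀ u, G.Adj u v → col u ≠ some (some c)

/-- Some unplayed (uncoloured and unblanked) vertex has all `k` colours among its
coloured neighbours: Breaker's winning condition in the game with blanks. -/
def BStuck {V : Type} (G : SimpleGraph V) {k : ℕ} (col : V → BState k) : Prop :=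
  ∃ v, col v = none ∧ ∀ c : Fin k, ∃ u, G.Adj u v ∧ col u = some (some c)

/-- `BMakerWins G k col t` : Maker has a winning strategy in the vertex colouring game
with blanks on `G` with `k` colours from position `col` (`t = true`: Maker's turn).
Maker must assign legal colours; Breaker may assign a legal colour or declare an
unplayed vertex blank.  Maker wins when every vertex is coloured or blank. -/
inductive BMakerWins {V : Type} [DecidableEq V] (G : SimpleGraph V) (k : ℕ) :
    (V → BState k) → Bool → Prop
  | done (col : V → BState k) (t : Bool) (h : ∀ v, col v ≠ none) :
      BMakerWins G k col t
  | maker (col : V → BState k) (hns : ¬ BStuck G col) (v : V) (c : Fin k)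
      (hc : BLegal G col v c)
      (ih : BMakerWins G k (Function.update col v (some (some c))) false) :
      BMakerWins G k col true
  | breaker (col : V → BState k) (hns : ¬ BStuck G col) (hne : ∃ v, col v = none)
      (ihc : ∀ v c, BLegal G col v c →
        BMakerWins G k (Function.update col v (some (some c))) true)
      (ihb : ∀ v, col v = none →
        BMakerWins G k (Function.update col v (some none)) true) :
      BMakerWins G k col false

/-- `BBreakerWins G k col t` : Breaker has a winning strategy in the vertex colouring
game with blanks on `G` with `k` colours from position `col`. -/
inductive BBreakerWins {V : Type} [DecidableEq V] (G : SimpleGraph V) (k : ℕ) :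
    (V → BState k) → Bool → Prop
  | stuck (col : V → BState k) (t : Bool) (h : BStuck G col) : BBreakerWins G k col t
  | maker (col : V → BState k) (hne : ∃ v, col v = none)
      (ih : ∀ v c, BLegal G col v c →
        BBreakerWins G k (Function.update col v (some (some c))) false) :
      BBreakerWins G k col true
  | colour (col : V → BState k) (v : V) (c : Fin k) (hc : BLegal G col v c)
      (ih : BBreakerWins G k (Function.update col v (some (some c))) true) :
      BBreakerWins G k col false
  | blank (col : V → BState k) (v : V) (hv : col v = none)
      (ih : BBreakerWins G k (Function.update col v (some none)) true) :
      BBreakerWins G k col false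

/-- The imagination relation: the real `k`-colour position `col` matches the imagined
`(k+1)`-colour position `col'`, where real blanks correspond to imagined blanks or to
the imagined extra colour `Fin.last k`. -/
def BRel {V : Type} {k : ℕ} (col : V → BState k) (col' : V → BState (k + 1)) : Prop :=
  ∀ v, (col v = none ∧ col' v = none) ∨
    (∃ c : Fin k, col v = some (some c) ∧ col' v = some (some c.castSucc)) ∨
    (col v = some none ∧ (col' v = some none ∨ col' v = some (some (Fin.last k))))

lemma BRel.none_of_none' {V : Type} {k : ℕ} {col : V → BState k}
    {col' : V → BState (k + 1)} (h : BRel col col') {v : V} (hv : col' v = none) :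
    col v = none := by
  rcases h v with ⟨h1, _⟩ | ⟨c, _, h2⟩ | ⟨_, h2 | h2⟩ <;> simp_all

lemma BRel.none'_of_none {V : Type} {k : ℕ} {col : V → BState k}
    {col' : V → BState (k + 1)} (h : BRel col col') {v : V} (hv : col v = none) :
    col' v = none := by
  rcases h v with ⟨_, h1⟩ | ⟨c, h2, _⟩ | ⟨h2, _⟩ <;> simp_all

lemma BRel.update {V : Type} [DecidableEq V] {k : ℕ} {col : V → BState k}
    {col' : V → BState (k + 1)} (h : BRel col col') (v : V)
    (a : BState k) (a' : BState (k + 1))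
    (ha : (a = none ∧ a' = none) ∨
      (∃ c : Fin k, a = some (some c) ∧ a' = some (some c.castSucc)) ∨
      (a = some none ∧ (a' = some none ∨ a' = some (some (Fin.last k))))) :
    BRel (Function.update col v a) (Function.update col' v a') := by
  intro u
  by_cases hu : u = v
  · subst hu; simpa using ha
  · simpa [Function.update_of_ne hu] using h u

lemma BRel.stuck {V : Type} {G : SimpleGraph V} {k : ℕ} {col : V → BState k}
    {col' : V → BState (k + 1)} (h : BRel col col') (hs : BStuck G col') :
    BStuck G col := by
  obtain ⟨v, hv, hall⟩ := hs
  refine ⟨v, h.none_of_none' hv, fun c => ?_⟩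
  obtain ⟨u, hadj, hu⟩ := hall c.castSucc
  refine ⟨u, hadj, ?_⟩
  rcases h u with ⟨_, h1⟩ | ⟨c₂, h2, h3⟩ | ⟨_, h2 | h2⟩
  · simp_all
  · rw [h3] at hu
    have : c₂ = c := Fin.castSucc_injective k (by simpa using hu)
    rw [h2, this]
  · simp_all
  · rw [h2] at hu
    have : Fin.last k = c.castSucc := by simpa using hu
    exact absurd this.symm (Fin.castSucc_lt_last c).ne

lemma BBreakerWins_of_rel {V : Type} [DecidableEq V] {G : SimpleGraph V} {k : ℕ}
    {col' : V → BState (k + 1)} {t : Bool}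
    (h : BBreakerWins G (k + 1) col' t) :
    ∀ col : V → BState k, BRel col col' → BBreakerWins G k col t := by
  induction h with
  | stuck col' t hs =>
      intro col hr
      exact BBreakerWins.stuck col t (hr.stuck hs)
  | maker col' hne ih ihm =>
      intro col hr
      obtain ⟨v, hv⟩ := hne
      refine BBreakerWins.maker col ⟨v, hr.none_of_none' hv⟩ ?_
      intro w c hc
      have hleg : BLegal G col' w c.castSucc := by
        refine ⟨hr.none'_of_none hc.1, fun u hadj hu => ?_⟩
        rcases hr u with ⟨_, h1⟩ | ⟨c₂, h2, h3⟩ | ⟨_, h2 | h2⟩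
        · simp_all
        · rw [h3] at hu
          have : c₂ = c := Fin.castSucc_injective k (by simpa using hu)
          exact hc.2 u hadj (by rw [h2, this])
        · simp_all
        · rw [h2] at hu
          have : Fin.last k = c.castSucc := by simpa using hu
          exact absurd this.symm (Fin.castSucc_lt_last c).ne
      exact ihm w c.castSucc hleg (Function.update col w (some (some c)))
        (hr.update w _ _ (Or.inr (Or.inl ⟨c, rfl, rfl⟩)))
  | colour col' v c hc ihw ih =>
      intro col hr
      induction c using Fin.lastCases with
      | last =>
          refine BBreakerWins.blank col v (hr.none_of_none' hc.1) ?_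
          exact ih _ (hr.update v _ _ (Or.inr (Or.inr ⟨rfl, Or.inr rfl⟩)))
      | cast c =>
          have hleg : BLegal G col v c := by
            refine ⟨hr.none_of_none' hc.1, fun u hadj hu => ?_⟩
            rcases hr u with ⟨h1, _⟩ | ⟨c₂, h2, h3⟩ | ⟨h2, _⟩
            · simp_all
            · rw [h2] at hu
              have : c₂ = c := by simpa using hu
              exact hc.2 u hadj (by rw [h3, this])
            · simp_all
          refine BBreakerWins.colour col v c hleg ?_
          exact ih _ (hr.update v _ _ (Or.inr (Or.inl ⟨c, rfl, rfl⟩)))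
  | blank col' v hv ihw ih =>
      intro col hr
      refine BBreakerWins.blank col v (hr.none_of_none' hv) ?_
      exact ih _ (hr.update v _ _ (Or.inr (Or.inr ⟨rfl, Or.inl rfl⟩)))

/-- If Breaker has a winning strategy in the vertex colouring game
with blanks on a finite graph `G` with `k + 1` colours, then Breaker also has a winning
strategy with `k` colours: the game with blanks is monotone (downward for Breaker) in
the number of colours. -/
theorem blanks_game_breaker_monotone {V : Type} [Fintype V] [DecidableEq V]
    (G : SimpleGraph V) (k : ℕ)
    (h : BBreakerWins G (k + 1) (fun _ => none) true) :
    BBreakerWins G k (fun _ => none) true := by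
  exact BBreakerWins_of_rel h _ (fun v => Or.inl ⟨rfl, rfl⟩)
end

section
/- Let G be a finite graph with vertex set U ∪ V where U = {u_1,...,u_{2m}}, the odd-indexed u's are isolated, the even-indexed u's form a clique and each even-indexed u is adjacent to every vertex of V. Consider the ordered vertex colouring game where all of U precedes all of V in the order (odd and even u's alternating so that Maker plays the odd-indexed and Breaker the even-indexed ones). Then with any starting palette of c colours, after all of U is played exactly c − m colours remain usable on every vertex of V, and the winner of the game equals the winner of the ordered vertex colouring game on G[V] with c − m colours. -/
/-- The gadget graph on `U ∪ V` where `U = {u_1, …, u_{2m}}` is represented by the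
indices `0, …, 2m - 1` of `Fin (2*m + n)` (the vertex `u_i` having index `i - 1`, so
odd-indexed `u`'s get even indices, played by Maker, and even-indexed `u`'s get odd
indices, played by Breaker) and `V` by the indices `2m, …, 2m + n - 1`, carrying a copy
of `H`.  The odd-indexed `u`'s are isolated; the even-indexed `u`'s form a clique and
are joined to every vertex of `V`. -/
def Gadget (m n : ℕ) (H : SimpleGraph (Fin n)) : SimpleGraph (Fin (2 * m + n)) :=
  SimpleGraph.fromRel (fun u v =>
    (u.1 % 2 = 1 ∧ u.1 < 2 * m ∧ v.1 % 2 = 1 ∧ v.1 < 2 * m) ∨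
    (u.1 % 2 = 1 ∧ u.1 < 2 * m ∧ 2 * m ≤ v.1) ∨
    (∃ (hu : 2 * m ≤ u.1) (hv : 2 * m ≤ v.1),
      H.Adj ⟨u.1 - 2 * m, by have := u.2; omega⟩ ⟨v.1 - 2 * m, by have := v.2; omega⟩))

namespace OMakerWins

variable {N k : ℕ} {G : SimpleGraph (Fin N)} {col : Fin N → Option (Fin k)} {s : ℕ}

theorem iff_of_even (h : s < N) (hs : s % 2 = 0) :
    OMakerWins G k col s ↔ ∃ c, OLegal G col ⟨s, h⟩ c ∧
      OMakerWins G k (Function.update col ⟨s, h⟩ (some c)) (s + 1) := by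
  constructor
  · intro hw
    cases hw with
    | done _ _ h' => omega
    | maker _ _ _ _ c hc hw => exact ⟨c, hc, hw⟩
    | breaker _ _ _ hs' => omega
  · rintro ⟨c, hc, hw⟩
    exact maker col s h hs c hc hw

theorem iff_of_odd (h : s < N) (hs : s % 2 = 1) :
    OMakerWins G k col s ↔ (∃ c, OLegal G col ⟨s, h⟩ c) ∧
      ∀ c, OLegal G col ⟨s, h⟩ c →
        OMakerWins G k (Function.update col ⟨s, h⟩ (some c)) (s + 1) := by
  constructor
  · intro hw
    cases hw with
    | done _ _ h' => omega
    | maker _ _ _ hs' => omega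
    | breaker _ _ _ _ hex hw => exact ⟨hex, hw⟩
  · rintro ⟨hex, hw⟩
    exact breaker col s h hs hex hw

end OMakerWins

theorem Fin.update_append_castAdd {α : Type*} {a b : ℕ} (u : Fin a → α) (v : Fin b → α)
    (i : Fin a) (x : α) :
    Function.update (Fin.append u v) (Fin.castAdd b i) x =
      Fin.append (Function.update u i x) v := by
  funext j
  induction j using Fin.addCases <;> simp [Function.update_apply, Fin.ext_iff]
  omega

theorem Fin.update_append_natAdd {α : Type*} {a b : ℕ} (u : Fin a → α) (v : Fin b → α)
    (i : Fin b) (x : α) :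
    Function.update (Fin.append u v) (Fin.natAdd a i) x =
      Fin.append u (Function.update v i x) := by
  funext j
  induction j using Fin.addCases <;> simp [Function.update_apply, Fin.ext_iff]
  omega

theorem Finset.exists_forall_ne_some_of_card_lt {α : Type*} {k : ℕ} (S : Finset α)
    (f : α → Option (Fin k)) (hS : S.card < k) : ∃ c, ∀ j ∈ S, f j ≠ some c := by
  obtain ⟨x, hx, hxS⟩ := Finset.exists_mem_notMem_of_card_lt_card
    (t := Finset.univ.map Function.Embedding.some) (s := S.image f)
    (by simpa using Finset.card_image_le.trans_lt hS)
  obtain ⟨c, -, rfl⟩ := Finset.mem_map.1 hx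
  exact ⟨c, fun j hj hfj => hxS (Finset.mem_image.2 ⟨j, hj, hfj⟩)⟩

theorem OLegal.comp_map_iff {N k c : ℕ} {G : SimpleGraph (Fin N)}
    {col : Fin N → Option (Fin k)} {v : Fin N} {e : Fin k → Fin c} (he : Function.Injective e)
    {ch : Fin k} :
    OLegal G (Option.map e ∘ col) v (e ch) ↔ OLegal G col v ch :=
  forall_congr' fun j => by
    simp only [Function.comp_apply, ← Option.map_some (f := e), (Option.map_injective he).ne_iff]

structure IsOddRainbow {N c : ℕ} (col : Fin N → Option (Fin c)) (s : ℕ) : Prop where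
  isSome : ∀ i : Fin N, i.1 % 2 = 1 → i.1 < s → (col i).isSome
  ne : ∀ i j : Fin N, i.1 % 2 = 1 → i.1 < s → j.1 % 2 = 1 → j.1 < s → i ≠ j →
    col i ≠ col j

namespace IsOddRainbow

variable {N c : ℕ} {col : Fin N → Option (Fin c)} {s : ℕ}

theorem zero : IsOddRainbow col 0 :=
  ⟨fun _ _ h => absurd h (Nat.not_lt_zero _), fun _ _ _ h => absurd h (Nat.not_lt_zero _)⟩

theorem update (hcol : IsOddRainbow col s) (hs : s < N) {ch : Fin c}
    (hch : s % 2 = 1 → ∀ j : Fin N, j.1 < s → j.1 % 2 = 1 → col j ≠ some ch) :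
    IsOddRainbow (Function.update col ⟨s, hs⟩ (some ch)) (s + 1) := by
  have hval : ∀ j : Fin N, j = ⟨s, hs⟩ ↔ j.1 = s := fun j => Fin.ext_iff
  constructor
  · intro i hi his
    rw [Function.update_apply]
    split_ifs with h
    · rfl
    · exact hcol.isSome i hi (by rw [hval] at h; omega)
  · intro i j hi his hj hjs hij
    simp only [Function.update_apply, hval]
    split_ifs with h₁ h₂ h₂
    · exact absurd (Fin.ext (h₁.trans h₂.symm)) hij
    · exact fun h => hch (h₁ ▸ hi) j (by omega) hj h.symm
    · exact hch (h₂ ▸ hj) i (by omega) hi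
    · exact hcol.ne i j hi (by omega) hj (by omega) hij

theorem exists_card_eq {m : ℕ} {col : Fin (2 * m) → Option (Fin c)}
    (hcol : IsOddRainbow col (2 * m)) :
    ∃ F : Finset (Fin c), F.card = m ∧
      (↑Fᶜ : Set (Fin c)) = {ch | ∀ i : Fin (2 * m), i.1 % 2 = 1 → col i ≠ some ch} := by
  let odd (a : Fin m) : Fin (2 * m) := ⟨2 * a + 1, by omega⟩
  have hodd (a : Fin m) : (odd a).1 % 2 = 1 := by simp [odd]
  let f (a : Fin m) : Fin c := (col (odd a)).get (hcol.isSome _ (hodd a) (odd a).2)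
  have hf (a : Fin m) : col (odd a) = some (f a) := (Option.some_get _).symm
  have hinj : f.Injective := fun a b hab => by
    by_contra hne
    refine hcol.ne _ _ (hodd a) (odd a).2 (hodd b) (odd b).2 (fun h => hne (Fin.ext ?_))
      (by rw [hf, hf, hab])
    simp only [odd, Fin.mk.injEq] at h
    omega
  refine ⟨Finset.univ.image f,
    by rw [Finset.card_image_of_injective _ hinj, Finset.card_fin], ?_⟩
  ext ch
  simp only [Finset.coe_compl, Finset.coe_image, Finset.coe_univ, Set.image_univ,
    Set.mem_compl_iff, Set.mem_range, Set.mem_ofPred_eq, not_exists]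
  constructor
  · intro h i hi hci
    have hodd_i : odd ⟨i / 2, by omega⟩ = i := Fin.ext (by simp only [odd]; omega)
    exact h ⟨i / 2, by omega⟩ (Option.some_inj.1 (by rw [← hf, hodd_i, hci]))
  · intro h a hfa
    exact h (odd a) (hodd a) (hfa ▸ hf a)

end IsOddRainbow

section Gadget

variable {m n c : ℕ} {H : SimpleGraph (Fin n)}

theorem gadget_adj_castAdd_castAdd {i j : Fin (2 * m)} :
    (Gadget m n H).Adj (Fin.castAdd n i) (Fin.castAdd n j) ↔
      i ≠ j ∧ i.1 % 2 = 1 ∧ j.1 % 2 = 1 := by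
  have := i.2; have := j.2
  simp only [Gadget, SimpleGraph.fromRel_adj, ne_eq, Fin.castAdd_inj, Fin.val_castAdd]
  constructor
  · rintro ⟨hne, h | h⟩ <;> refine ⟨hne, ?_⟩ <;> rcases h with h | h | ⟨h, -⟩ <;> omega
  · rintro ⟨hne, hi, hj⟩
    exact ⟨hne, Or.inl (Or.inl ⟨hi, i.2, hj, j.2⟩)⟩

theorem gadget_adj_castAdd_natAdd {i : Fin (2 * m)} {t : Fin n} :
    (Gadget m n H).Adj (Fin.castAdd n i) (Fin.natAdd (2 * m) t) ↔ i.1 % 2 = 1 := by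
  have := i.2
  simp only [Gadget, SimpleGraph.fromRel_adj, ne_eq, Fin.val_castAdd, Fin.val_natAdd]
  constructor
  · rintro ⟨-, (h | h | ⟨h, -⟩) | (h | h | ⟨-, h, -⟩)⟩ <;> omega
  · intro hi
    refine ⟨fun h => ?_, Or.inl (Or.inr (Or.inl ⟨hi, i.2, by omega⟩))⟩
    have := congrArg Fin.val h
    simp only [Fin.val_castAdd, Fin.val_natAdd] at this
    omega

theorem gadget_adj_natAdd_natAdd {s t : Fin n} :
    (Gadget m n H).Adj (Fin.natAdd (2 * m) s) (Fin.natAdd (2 * m) t) ↔ H.Adj s t := by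
  simp only [Gadget, SimpleGraph.fromRel_adj, ne_eq, Fin.natAdd_inj, Fin.val_natAdd,
    Nat.add_sub_cancel_left, Fin.eta]
  constructor
  · rintro ⟨-, (h | h | ⟨-, -, h⟩) | (h | h | ⟨-, -, h⟩)⟩ <;>
      first | omega | exact h | exact h.symm
  · intro h
    exact ⟨H.ne_of_adj h, Or.inl (Or.inr (Or.inr ⟨by omega, by omega, h⟩))⟩

theorem gadget_oLegal_castAdd_iff {colU : Fin (2 * m) → Option (Fin c)}
    {colV : Fin n → Option (Fin c)} {i : Fin (2 * m)} {ch : Fin c} :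
    OLegal (Gadget m n H) (Fin.append colU colV) (Fin.castAdd n i) ch ↔
      (i.1 % 2 = 1 → ∀ j : Fin (2 * m), j.1 < i.1 → j.1 % 2 = 1 → colU j ≠ some ch) := by
  constructor
  · intro h hi j hji hj
    simpa using h (Fin.castAdd n j) (Fin.lt_def.2 hji)
      (gadget_adj_castAdd_castAdd.2 ⟨fun e => by omega, hj, hi⟩)
  · intro h j hji hadj
    induction j using Fin.addCases with
    | left j =>
      obtain ⟨-, hj, hi⟩ := gadget_adj_castAdd_castAdd.1 hadj
      simpa using h hi j hji hj
    | right j =>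
      have := Fin.lt_def.1 hji
      simp only [Fin.val_castAdd, Fin.val_natAdd] at this
      omega

theorem gadget_exists_oLegal_castAdd (hmc : m ≤ c) (colU : Fin (2 * m) → Option (Fin c))
    (colV : Fin n → Option (Fin c)) (i : Fin (2 * m)) :
    ∃ ch, OLegal (Gadget m n H) (Fin.append colU colV) (Fin.castAdd n i) ch := by
  let earlier := Finset.univ.filter fun j : Fin (2 * m) => j.1 < i.1 ∧ j.1 % 2 = 1
  have hcard : earlier.card < c := by
    have : earlier.card ≤ (Finset.range (i.1 / 2)).card :=
      Finset.card_le_card_of_injOn (fun j => j.1 / 2)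
        (fun j hj => by simp only [earlier, Finset.coe_filter, Set.mem_ofPred_eq, Finset.mem_univ,
          true_and, Finset.coe_range, Set.mem_Iio] at hj ⊢; omega)
        (fun j hj j' hj' h => by
          simp only [earlier, Finset.coe_filter, Set.mem_ofPred_eq, Finset.mem_univ, true_and]
            at hj hj' h
          exact Fin.ext (by omega))
    rw [Finset.card_range] at this
    have := i.2
    omega
  obtain ⟨ch, hch⟩ := earlier.exists_forall_ne_some_of_card_lt colU hcard
  exact ⟨ch, gadget_oLegal_castAdd_iff.2 fun _ j hji hj =>
    hch j (by simpa [earlier, hj] using hji)⟩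

theorem gadget_oLegal_natAdd_iff {colU : Fin (2 * m) → Option (Fin c)}
    {colV : Fin n → Option (Fin c)} {t : Fin n} {ch : Fin c} :
    OLegal (Gadget m n H) (Fin.append colU colV) (Fin.natAdd (2 * m) t) ch ↔
      (∀ i : Fin (2 * m), i.1 % 2 = 1 → colU i ≠ some ch) ∧ OLegal H colV t ch := by
  constructor
  · intro h
    refine ⟨fun i hi => ?_, fun s hst hadj => ?_⟩
    · have hlt : Fin.castAdd n i < Fin.natAdd (2 * m) t :=
        Fin.lt_def.2 (by simp only [Fin.val_castAdd, Fin.val_natAdd]; omega)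
      simpa using h (Fin.castAdd n i) hlt (gadget_adj_castAdd_natAdd.2 hi)
    · simpa using h (Fin.natAdd (2 * m) s) ((Fin.natAdd_lt_natAdd_iff _).2 hst)
        (gadget_adj_natAdd_natAdd.2 hadj)
  · rintro ⟨hU, hV⟩ j hjt hadj
    induction j using Fin.addCases with
    | left i => simpa using hU i (gadget_adj_castAdd_natAdd.1 hadj)
    | right s =>
      simpa using hV s ((Fin.natAdd_lt_natAdd_iff _).1 hjt)
        (gadget_adj_natAdd_natAdd.1 hadj)

theorem gadget_makerWins_append_map_iff {k : ℕ} {colU : Fin (2 * m) → Option (Fin c)}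
    {e : Fin k → Fin c} (he : Function.Injective e)
    (hrange : ∀ ch, ch ∈ Set.range e ↔
      ∀ i : Fin (2 * m), i.1 % 2 = 1 → colU i ≠ some ch)
    (t : ℕ) (col' : Fin n → Option (Fin k)) :
    OMakerWins (Gadget m n H) c (Fin.append colU (Option.map e ∘ col')) (2 * m + t) ↔
      OMakerWins H k col' t := by
  induction h : n - t generalizing t col' with
  | zero => exact ⟨fun _ => .done _ _ (by omega), fun _ => .done _ _ (by omega)⟩
  | succ d ih =>
    have ht : t < n := by omega
    have ih' : ∀ col', OMakerWins (Gadget m n H) c (Fin.append colU (Option.map e ∘ col'))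
        (2 * m + t + 1) ↔ OMakerWins H k col' (t + 1) := fun col' => ih (t + 1) col' (by omega)
    have hlegal : ∀ ch, OLegal (Gadget m n H) (Fin.append colU (Option.map e ∘ col'))
        ⟨2 * m + t, by omega⟩ ch ↔ ∃ ch', OLegal H col' ⟨t, ht⟩ ch' ∧ e ch' = ch := by
      intro ch
      change OLegal _ _ (Fin.natAdd (2 * m) ⟨t, ht⟩) ch ↔ _
      rw [gadget_oLegal_natAdd_iff, ← hrange]
      constructor
      · rintro ⟨⟨ch', rfl⟩, h⟩
        exact ⟨ch', (OLegal.comp_map_iff he).1 h, rfl⟩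
      · rintro ⟨ch', h, rfl⟩
        exact ⟨⟨ch', rfl⟩, (OLegal.comp_map_iff he).2 h⟩
    have hupdate : ∀ ch', Function.update (Fin.append colU (Option.map e ∘ col'))
        ⟨2 * m + t, by omega⟩ (some (e ch')) =
          Fin.append colU (Option.map e ∘ Function.update col' ⟨t, ht⟩ (some ch')) := by
      intro ch'
      rw [Function.comp_update]
      exact Fin.update_append_natAdd _ _ ⟨t, ht⟩ _
    rcases Nat.mod_two_eq_zero_or_one t with hpar | hpar
    · rw [OMakerWins.iff_of_even (by omega) (by omega), OMakerWins.iff_of_even ht hpar]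
      simp only [hlegal, exists_exists_and_eq_and, hupdate, ih']
    · rw [OMakerWins.iff_of_odd (by omega) (by omega), OMakerWins.iff_of_odd ht hpar]
      simp only [hlegal, forall_exists_index, and_imp, forall_apply_eq_imp_iff₂, hupdate, ih']
      exact and_congr_left'
        ⟨fun ⟨_, ch', h, _⟩ => ⟨ch', h⟩, fun ⟨ch', h⟩ => ⟨_, ch', h, rfl⟩⟩

theorem gadget_makerWins_append_none_iff (hmc : m ≤ c) {s : ℕ} (hs : s ≤ 2 * m)
    {colU : Fin (2 * m) → Option (Fin c)} (hU : IsOddRainbow colU s) :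
    OMakerWins (Gadget m n H) c (Fin.append colU fun _ => none) s ↔
      OMakerWins H (c - m) (fun _ => none) 0 := by
  induction h : 2 * m - s generalizing s colU with
  | zero =>
    obtain rfl : s = 2 * m := by omega
    obtain ⟨F, hcard, hF⟩ := hU.exists_card_eq
    have hcompl : Fᶜ.card = c - m := by rw [Finset.card_compl, hcard, Fintype.card_fin]
    exact gadget_makerWins_append_map_iff (Fᶜ.orderEmbOfFin hcompl).injective
      (fun ch => by rw [Finset.range_orderEmbOfFin, hF]; rfl) 0 (fun _ => none)
  | succ d ih =>
    have hs' : s < 2 * m := by omega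
    have hlegal : ∀ ch,
        OLegal (Gadget m n H) (Fin.append colU fun _ => none) ⟨s, by omega⟩ ch ↔
          (s % 2 = 1 → ∀ j : Fin (2 * m), j.1 < s → j.1 % 2 = 1 → colU j ≠ some ch) :=
      fun _ => gadget_oLegal_castAdd_iff (i := ⟨s, hs'⟩)
    have hnext : ∀ ch,
        (s % 2 = 1 → ∀ j : Fin (2 * m), j.1 < s → j.1 % 2 = 1 → colU j ≠ some ch) →
        (OMakerWins (Gadget m n H) c
          (Function.update (Fin.append colU fun _ => none) ⟨s, by omega⟩ (some ch)) (s + 1) ↔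
          OMakerWins H (c - m) (fun _ => none) 0) := by
      intro ch hch
      rw [show (⟨s, _⟩ : Fin (2 * m + n)) = Fin.castAdd n ⟨s, hs'⟩ from rfl,
        Fin.update_append_castAdd]
      exact ih (by omega) (hU.update hs' hch) (by omega)
    rcases Nat.mod_two_eq_zero_or_one s with hpar | hpar
    · have hfree : s % 2 = 1 →
          ∀ j : Fin (2 * m), j.1 < s → j.1 % 2 = 1 → colU j ≠ some ⟨0, by omega⟩ :=
        fun h => absurd h (by omega)
      rw [OMakerWins.iff_of_even (by omega) hpar]
      exact ⟨fun ⟨ch, hch, hw⟩ => (hnext ch ((hlegal ch).1 hch)).1 hw,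
        fun hw => ⟨_, (hlegal _).2 hfree, (hnext _ hfree).2 hw⟩⟩
    · obtain ⟨ch₀, h₀⟩ :=
        gadget_exists_oLegal_castAdd hmc colU (fun _ => none) ⟨s, hs'⟩
      rw [OMakerWins.iff_of_odd (by omega) hpar]
      exact ⟨fun ⟨_, hw⟩ => (hnext ch₀ ((hlegal ch₀).1 h₀)).1 (hw ch₀ h₀),
        fun hw => ⟨⟨ch₀, h₀⟩, fun ch hch => (hnext ch ((hlegal ch).1 hch)).2 hw⟩⟩

theorem gadget_ncard_usable_colours {colU : Fin (2 * m) → Option (Fin c)}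
    (hU : IsOddRainbow colU (2 * m)) (t : Fin n) :
    Set.ncard {ch : Fin c | ∀ u, (Gadget m n H).Adj u (Fin.natAdd (2 * m) t) →
      Fin.append colU (fun _ => none) u ≠ some ch} = c - m := by
  obtain ⟨F, hcard, hF⟩ := hU.exists_card_eq
  have husable : {ch : Fin c | ∀ u, (Gadget m n H).Adj u (Fin.natAdd (2 * m) t) →
      Fin.append colU (fun _ => none) u ≠ some ch} =
        {ch | ∀ i : Fin (2 * m), i.1 % 2 = 1 → colU i ≠ some ch} := by
    ext ch
    refine ⟨fun h i hi => by simpa using h (Fin.castAdd n i) (gadget_adj_castAdd_natAdd.2 hi),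
      fun h u hu => ?_⟩
    induction u using Fin.addCases with
    | left i => simpa using h i (gadget_adj_castAdd_natAdd.1 hu)
    | right _ => simp
  rw [husable, ← hF, Set.ncard_coe_finset, Finset.card_compl, hcard, Fintype.card_fin]

end Gadget

/-- Palette-reduction gadget.  Let `G` be the gadget graph built
from `H` as above, with the ordered vertex colouring game played with a palette of `c`
colours, `m ≤ c`.  First: in any position in which all of `U` has been (properly)
played — the Breaker-vertices of `U` all coloured, with pairwise distinct colours since
they form a clique — and `V` is untouched, every vertex of `V` has exactly `c - m`
usable colours remaining (the same palette at every vertex of `V`).  Second: the winner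
of the ordered game on the gadget with `c` colours equals the winner of the ordered
game on `H` with `c - m` colours. -/
theorem gadget_palette_reduction (m n : ℕ) (H : SimpleGraph (Fin n)) (c : ℕ)
    (hmc : m ≤ c) :
    (∀ col : Fin (2 * m + n) → Option (Fin c),
      (∀ i : Fin (2 * m + n), i.1 % 2 = 1 → i.1 < 2 * m → (col i).isSome) →
      (∀ i j : Fin (2 * m + n), i.1 % 2 = 1 → i.1 < 2 * m → j.1 % 2 = 1 → j.1 < 2 * m →
        i ≠ j → col i ≠ col j) →
      (∀ v : Fin (2 * m + n), 2 * m ≤ v.1 → col v = none) →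
      ∀ v : Fin (2 * m + n), 2 * m ≤ v.1 →
        Set.ncard {ch : Fin c |
          ∀ u : Fin (2 * m + n), (Gadget m n H).Adj u v → col u ≠ some ch} = c - m) ∧
    (OMakerWins (Gadget m n H) c (fun _ => none) 0 ↔
      OMakerWins H (c - m) (fun _ => none) 0) := by
  refine ⟨fun col hsome hne hnone v hv => ?_, ?_⟩
  · have hU : IsOddRainbow (fun i : Fin (2 * m) => col (Fin.castAdd n i)) (2 * m) :=
      ⟨fun i hi hlt => hsome _ hi hlt, fun i j hi hilt hj hjlt hij =>
        hne _ _ hi hilt hj hjlt ((Fin.castAdd_injective _ _).ne hij)⟩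
    have hcol : Fin.append (fun i => col (Fin.castAdd n i)) (fun _ => none) = col := by
      funext u
      induction u using Fin.addCases <;> simp [hnone]
    obtain ⟨t, rfl⟩ : ∃ t : Fin n, Fin.natAdd (2 * m) t = v :=
      ⟨⟨v - 2 * m, by omega⟩, Fin.ext (by simp only [Fin.val_natAdd]; omega)⟩
    rw [← hcol]
    exact gadget_ncard_usable_colours hU t
  · rw [← Fin.append_castAdd_natAdd (f := fun _ => none)]
    exact gadget_makerWins_append_none_iff hmc (Nat.zero_le _) IsOddRainbow.zero
end
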